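/- arXiv:1605.06686 — 11 statements merged into one kernel-verified Lean document; each statement's English description precedes it below -/
import Mathlib

section
/- Let S ⊆ ℝⁿ be a closed set with 0 ∉ S, let 𝓡, 𝓟 ⊆ ℝⁿ, and let ψ : 𝓡 → ℝ be a valid function for S, 𝓡. Then for every minimal lifting π : 𝓟 → ℝ of ψ, one has π(p) ≤ π(p + w) for all p ∈ 𝓟 and all w ∈ W_S⁺ such that p + w ∈ 𝓟; consequently π(p) = π(p + w) for all p ∈ 𝓟 and all w ∈ W_S such that p + w ∈ 𝓟. -/
open scoped BigOperators
open Pointwise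

noncomputable section

/-- `(ψ, π)` is a valid (partial) cut-generating pair for `S, R, P`. -/
def ValidPair {E : Type*} [AddCommGroup E] [Module ℝ E]
    (S R P : Set E) (psi pi : E → ℝ) : Prop :=
  ∀ (k l : ℕ) (r : Fin k → E) (p : Fin l → E),
    (∀ i, r i ∈ R) → (∀ j, p j ∈ P) →
    ∀ (s : Fin k → ℝ) (y : Fin l → ℕ),
      (∀ i, 0 ≤ s i) →
      (∑ i, s i • r i) + (∑ j, (y j : ℝ) • p j) ∈ S →
      1 ≤ (∑ i, psi (r i) * s i) + (∑ j, pi (p j) * (y j : ℝ))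

/-- `W_S⁺`. -/
def Wplus {E : Type*} [AddCommGroup E] [Module ℝ E] (S : Set E) : Set E :=
  {w | ∀ s ∈ S, ∀ lam : ℕ, s + (lam : ℝ) • w ∈ S}

/-- `W_S` (integer translations). -/
def Wint {E : Type*} [AddCommGroup E] [Module ℝ E] (S : Set E) : Set E :=
  {w | ∀ s ∈ S, ∀ lam : ℤ, s + (lam : ℝ) • w ∈ S}

/-- `π` is a lifting of `ψ` (full-space setting). -/
def IsLifting {E : Type*} [AddCommGroup E] [Module ℝ E] (S : Set E) (psi pi : E → ℝ) : Prop :=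
  ValidPair S Set.univ Set.univ psi pi

/-- `π` is a minimal lifting of `ψ` (full-space setting). -/
def IsMinimalLifting {E : Type*} [AddCommGroup E] [Module ℝ E] (S : Set E)
    (psi pi : E → ℝ) : Prop :=
  IsLifting S psi pi ∧ ∀ pi' : E → ℝ, IsLifting S psi pi' → pi' ≤ pi → pi' = pi

/-- `V_ψ(p) = inf {π(p) : π minimal lifting of ψ}`. -/
def Vpsi {E : Type*} [AddCommGroup E] [Module ℝ E] (S : Set E) (psi : E → ℝ) (p : E) : ℝ :=
  sInf {v : ℝ | ∃ pi : E → ℝ, IsMinimalLifting S psi pi ∧ pi p = v}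

/-- `𝓛_{ψ,p*}`. -/
def LiftSet {E : Type*} [AddCommGroup E] [Module ℝ E] (S : Set E) (psi : E → ℝ) (p : E) :
    Set (E → ℝ) :=
  {pi | IsMinimalLifting S psi pi ∧ pi p = Vpsi S psi p}

/-- The fixing region `𝓕_{ψ,p*}`. -/
def FixingRegion {E : Type*} [AddCommGroup E] [Module ℝ E] (S : Set E) (psi : E → ℝ)
    (p : E) : Set E :=
  {q | ∀ pi1 ∈ LiftSet S psi p, ∀ pi2 ∈ LiftSet S psi p, pi1 q = pi2 q}

/-- `π` is a minimal lifting of `ψ` relative to domains `R`, `P`. -/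
def IsMinimalLiftingOn {E : Type*} [AddCommGroup E] [Module ℝ E]
    (S R P : Set E) (psi pi : E → ℝ) : Prop :=
  ValidPair S R P psi pi ∧
    ∀ pi' : E → ℝ, ValidPair S R P psi pi' → (∀ p ∈ P, pi' p ≤ pi p) → ∀ p ∈ P, pi' p = pi p

lemma mono_aux {E : Type*} [AddCommGroup E] [Module ℝ E]
    (S R P : Set E) (psi pi : E → ℝ)
    (hpi : IsMinimalLiftingOn S R P psi pi)
    (p : E) (hp : p ∈ P) (w : E) (hw : w ∈ Wplus S) (hpw : p + w ∈ P) :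
    pi p ≤ pi (p + w) := by
  classical
  by_contra hlt
  push_neg at hlt
  set pi' : E → ℝ := fun q => if q = p then pi (p + w) else pi q with hpi'def
  have hvalid : ValidPair S R P psi pi' := by
    intro k l r pc hr hpc s y hs hmem
    set pc' : Fin l → E := fun j => if pc j = p then p + w else pc j with hpc'def
    have hpc'mem : ∀ j, pc' j ∈ P := by
      intro j
      by_cases h : pc j = p <;> simp only [hpc'def, h, if_true, if_false] <;>
        [exact hpw; exact hpc j]
    have hterm : ∀ j, (y j : ℝ) • pc' j
        = (y j : ℝ) • pc j + (if pc j = p then (y j : ℝ) else 0) • w := by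
      intro j
      by_cases h : pc j = p <;> simp [hpc'def, h, smul_add]
    have hcast : ((∑ j, if pc j = p then y j else 0 : ℕ) : ℝ)
        = ∑ j, (if pc j = p then (y j : ℝ) else 0) := by
      push_cast [apply_ite (fun m : ℕ => (m : ℝ))]
      rfl
    have hsum : (∑ j, (y j : ℝ) • pc' j)
        = (∑ j, (y j : ℝ) • pc j)
          + ((∑ j, if pc j = p then y j else 0 : ℕ) : ℝ) • w := by
      rw [hcast]
      calc (∑ j, (y j : ℝ) • pc' j)
          = ∑ j, ((y j : ℝ) • pc j + (if pc j = p then (y j : ℝ) else 0) • w) :=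
            Finset.sum_congr rfl fun j _ => hterm j
        _ = (∑ j, (y j : ℝ) • pc j)
            + (∑ j, (if pc j = p then (y j : ℝ) else 0)) • w := by
            rw [Finset.sum_add_distrib, Finset.sum_smul]
    have hmem' : (∑ i, s i • r i) + (∑ j, (y j : ℝ) • pc' j) ∈ S := by
      rw [hsum, ← add_assoc]
      exact hw _ hmem _
    have := hpi.1 k l r pc' hr hpc'mem s y hs hmem'
    have heq : (∑ j, pi (pc' j) * (y j : ℝ)) = ∑ j, pi' (pc j) * (y j : ℝ) := by
      refine Finset.sum_congr rfl fun j _ => ?_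
      by_cases h : pc j = p <;> simp [hpc'def, hpi'def, h]
    rwa [heq] at this
  have hle : ∀ q ∈ P, pi' q ≤ pi q := by
    intro q _
    by_cases h : q = p
    · simp only [hpi'def, h, if_true]
      exact le_of_lt (h ▸ hlt)
    · simp [hpi'def, h]
  have := hpi.2 pi' hvalid hle p hp
  simp only [hpi'def, if_true] at this
  exact absurd this (ne_of_lt hlt)

/-- Proposition 2.1(a): every minimal lifting is nondecreasing along `W_S⁺` and
invariant along `W_S = W_S⁺ ∩ (−W_S⁺)`. -/
theorem stmt0 {n : ℕ} (hn : 1 ≤ n) (S : Set (Fin n → ℝ)) (hSclosed : IsClosed S)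
    (hS0 : (0 : Fin n → ℝ) ∉ S) (R P : Set (Fin n → ℝ)) (psi : (Fin n → ℝ) → ℝ)
    (hpsi : ValidPair S R R psi psi) (pi : (Fin n → ℝ) → ℝ)
    (hpi : IsMinimalLiftingOn S R P psi pi) :
    (∀ p ∈ P, ∀ w ∈ Wplus S, p + w ∈ P → pi p ≤ pi (p + w)) ∧
      (∀ p ∈ P, ∀ w : Fin n → ℝ, w ∈ Wplus S → -w ∈ Wplus S → p + w ∈ P →
        pi p = pi (p + w)) := by
  constructor
  · intro p hp w hw hpw
    exact mono_aux S R P psi pi hpi p hp w hw hpw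
  · intro p hp w hw hw' hpw
    have h1 := mono_aux S R P psi pi hpi p hp w hw hpw
    have h2 := mono_aux S R P psi pi hpi (p + w) hpw (-w) hw' (by simpa using hp)
    have heq : p + w + -w = p := by abel
    rw [heq] at h2
    exact le_antisymm h1 h2
end
end

section
/- Let S ⊆ ℝⁿ be a closed set with 0 ∉ S, let 𝓡 ⊆ ℝⁿ, and let ψ : 𝓡 → ℝ be a valid function for S, 𝓡. Define ψ*(r) := inf{ψ(r + w) : w ∈ W_S⁺ such that r + w ∈ 𝓡} for r ∈ 𝓡 (a value in ℝ ∪ {−∞}). Then (ψ, ψ*) is a valid pair for S, 𝓡, 𝓡; that is, for every choice of matrices R, P with columns in 𝓡 and every (s, y) ∈ ℝ₊ᵏ × ℤ₊ˡ with Rs + Py ∈ S, one has Σ_r ψ(r)s_r + Σ_p ψ*(p)y_p ≥ 1. -/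
open scoped BigOperators
open Pointwise

noncomputable section

/-- `ψ*(r) = inf {ψ(r + w) : w ∈ W_S⁺, r + w ∈ R}`, as an extended real number. -/
def psiStarE {E : Type*} [AddCommGroup E] [Module ℝ E] (S R : Set E) (psi : E → ℝ)
    (r : E) : EReal :=
  sInf {x : EReal | ∃ w ∈ Wplus S, r + w ∈ R ∧ x = ((psi (r + w) : ℝ) : EReal)}

/-- Proposition 2.1(b): `(ψ, ψ*)` is a valid partial cut-generating pair for `S, R, R`. -/
theorem stmt1 {n : ℕ} (hn : 1 ≤ n) (S : Set (Fin n → ℝ)) (hSclosed : IsClosed S)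
    (hS0 : (0 : Fin n → ℝ) ∉ S) (R : Set (Fin n → ℝ)) (psi : (Fin n → ℝ) → ℝ)
    (hpsi : ValidPair S R R psi psi) :
    ∀ (k l : ℕ) (rv : Fin k → Fin n → ℝ) (pv : Fin l → Fin n → ℝ),
      (∀ i, rv i ∈ R) → (∀ j, pv j ∈ R) →
      ∀ (s : Fin k → ℝ) (y : Fin l → ℕ),
        (∀ i, 0 ≤ s i) →
        (∑ i, s i • rv i) + (∑ j, (y j : ℝ) • pv j) ∈ S →
        (1 : EReal) ≤ ((∑ i, psi (rv i) * s i : ℝ) : EReal) +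
          ∑ j, psiStarE S R psi (pv j) * (((y j : ℝ) : EReal)) := by
  intro k l rv pv hrv hpv s y hs hmem
  classical
  set A : ℝ := ∑ i, psi (rv i) * s i with hA
  -- zero is in Wplus
  have h0W : (0 : Fin n → ℝ) ∈ Wplus S := by
    intro s hs lam; simpa using hs
  -- key membership lemma
  have hmem' : ∀ (w : Fin l → (Fin n → ℝ)), (∀ j, w j ∈ Wplus S) →
      (∑ i, s i • rv i) + (∑ j, (y j : ℝ) • (pv j + w j)) ∈ S := by
    intro w hw
    have hrw : (∑ i, s i • rv i) + (∑ j, (y j : ℝ) • (pv j + w j))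
        = ((∑ i, s i • rv i) + (∑ j, (y j : ℝ) • pv j)) + ∑ j, (y j : ℝ) • w j := by
      simp only [smul_add, Finset.sum_add_distrib]; abel
    rw [hrw]
    have main : ∀ (T : Finset (Fin l)) (x : Fin n → ℝ), x ∈ S →
        x + ∑ j ∈ T, (y j : ℝ) • w j ∈ S := by
      intro T
      induction T using Finset.induction_on with
      | empty => intro x hx; simpa using hx
      | @insert j T' hnot ih =>
        intro x hx
        rw [Finset.sum_insert hnot, ← add_assoc]
        exact ih _ (hw j x hx (y j))
    exact main Finset.univ _ hmem
  -- key validity lemma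
  have key : ∀ (w : Fin l → (Fin n → ℝ)), (∀ j, w j ∈ Wplus S) → (∀ j, pv j + w j ∈ R) →
      1 ≤ A + ∑ j, psi (pv j + w j) * (y j : ℝ) := by
    intro w hw hwR
    exact hpsi k l rv (fun j => pv j + w j) hrv hwR s y hs (hmem' w hw)
  -- psiStarE is not ⊤
  have hne_top : ∀ j, psiStarE S R psi (pv j) ≤ ((psi (pv j) : ℝ) : EReal) := by
    intro j
    apply sInf_le
    exact ⟨0, h0W, by simpa using hpv j, by simp⟩
  -- lower bound when y j ≠ 0
  have hlow : ∀ j, y j ≠ 0 →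
      (((1 - A - ∑ j' ∈ Finset.univ.erase j, psi (pv j') * (y j' : ℝ)) / (y j : ℝ) : ℝ) : EReal)
        ≤ psiStarE S R psi (pv j) := by
    intro j hj
    apply le_sInf
    rintro x ⟨w, hwW, hwR, rfl⟩
    rw [EReal.coe_le_coe_iff]
    have hy : (0 : ℝ) < (y j : ℝ) := by
      exact_mod_cast Nat.pos_of_ne_zero hj
    rw [div_le_iff₀ hy]
    have hwW' : ∀ j', (if j' = j then w else 0) ∈ Wplus S := by
      intro j'; by_cases h : j' = j <;> simp [h, hwW, h0W]
    have hwR' : ∀ j', pv j' + (if j' = j then w else 0) ∈ R := by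
      intro j'; by_cases h : j' = j <;> simp [h, hwR, hpv j']
    have hk := key (fun j' => if j' = j then w else 0) hwW' hwR'
    rw [← Finset.sum_erase_add _ _ (Finset.mem_univ j)] at hk
    simp only [if_pos rfl, if_true] at hk
    have hsum : ∑ j' ∈ Finset.univ.erase j,
        psi (pv j' + if j' = j then w else 0) * (y j' : ℝ)
        = ∑ j' ∈ Finset.univ.erase j, psi (pv j') * (y j' : ℝ) := by
      apply Finset.sum_congr rfl
      intro j' hj'
      rw [if_neg (Finset.ne_of_mem_erase hj'), add_zero]
    rw [hsum] at hk
    linarith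
  have hne_bot : ∀ j, y j ≠ 0 → psiStarE S R psi (pv j) ≠ ⊥ := by
    intro j hj h
    have := hlow j hj
    rw [h] at this
    exact (EReal.bot_lt_coe _).not_ge this
  set c : Fin l → ℝ := fun j => (psiStarE S R psi (pv j)).toReal with hc
  have heq : ∀ j, y j ≠ 0 → ((c j : ℝ) : EReal) = psiStarE S R psi (pv j) := by
    intro j hj
    refine EReal.coe_toReal (fun h => ?_) (hne_bot j hj)
    have h1 := hne_top j
    rw [h] at h1
    exact (EReal.coe_lt_top (psi (pv j))).not_ge h1
  -- rewrite the EReal sum as a real sum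
  have hterm : ∀ j, psiStarE S R psi (pv j) * (((y j : ℝ) : EReal))
      = ((c j * (y j : ℝ) : ℝ) : EReal) := by
    intro j
    by_cases hj : y j = 0
    · simp [hj]
    · rw [← heq j hj, ← EReal.coe_mul]
  have hcoesum : ∀ (T : Finset (Fin l)) (f : Fin l → ℝ),
      ((∑ x ∈ T, f x : ℝ) : EReal) = ∑ x ∈ T, ((f x : ℝ) : EReal) := by
    intro T f
    induction T using Finset.induction_on with
    | empty => simp
    | @insert a T' hnot ih => rw [Finset.sum_insert hnot, Finset.sum_insert hnot,
        EReal.coe_add, ih]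
  have hsumeq : ∑ j, psiStarE S R psi (pv j) * (((y j : ℝ) : EReal))
      = ((∑ j, c j * (y j : ℝ) : ℝ) : EReal) := by
    rw [hcoesum]
    exact Finset.sum_congr rfl fun j _ => hterm j
  rw [hsumeq, ← EReal.coe_add, show (1 : EReal) = ((1 : ℝ) : EReal) from rfl,
    EReal.coe_le_coe_iff]
  -- now a real inequality
  by_contra hcon
  push_neg at hcon
  set t : ℝ := ∑ j, (y j : ℝ) with ht
  have htnn : 0 ≤ t := Finset.sum_nonneg fun j _ => by positivity
  have hden : t + 1 ≠ 0 := by linarith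
  set δ : ℝ := (1 - (A + ∑ j, c j * (y j : ℝ))) / (t + 1) with hδ
  have hδpos : 0 < δ := div_pos (by linarith) (by linarith)
  have hchoice : ∀ j, ∃ w, w ∈ Wplus S ∧ pv j + w ∈ R ∧
      psi (pv j + w) * (y j : ℝ) ≤ (c j + δ) * (y j : ℝ) := by
    intro j
    by_cases hj : y j = 0
    · exact ⟨0, h0W, by simpa using hpv j, by simp [hj]⟩
    · have hlt : psiStarE S R psi (pv j) < ((c j + δ : ℝ) : EReal) := by
        rw [← heq j hj, EReal.coe_lt_coe_iff]
        linarith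
      obtain ⟨x, hxT, hxlt⟩ := sInf_lt_iff.mp hlt
      obtain ⟨w, hwW, hwR, rfl⟩ := hxT
      refine ⟨w, hwW, hwR, ?_⟩
      have : psi (pv j + w) < c j + δ := by
        exact_mod_cast hxlt
      exact mul_le_mul_of_nonneg_right this.le (by positivity)
  choose w hwW hwR hwle using hchoice
  have hk := key w hwW hwR
  have h2 : ∑ j, psi (pv j + w j) * (y j : ℝ) ≤ ∑ j, (c j + δ) * (y j : ℝ) :=
    Finset.sum_le_sum fun j _ => hwle j
  have h3 : ∑ j, (c j + δ) * (y j : ℝ) = (∑ j, c j * (y j : ℝ)) + δ * t := by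
    rw [ht, Finset.mul_sum, ← Finset.sum_add_distrib]
    exact Finset.sum_congr rfl fun j _ => by ring
  have h5 : δ * t + δ = 1 - (A + ∑ j, c j * (y j : ℝ)) := by
    have h := div_mul_cancel₀ (1 - (A + ∑ j, c j * (y j : ℝ))) hden
    calc δ * t + δ = δ * (t + 1) := by ring
      _ = _ := by rw [hδ]; exact h
  linarith
end
end

section
/- Let S ⊆ ℝⁿ be a closed set with 0 ∉ S, let 𝓡 ⊆ ℝⁿ, and let ψ : 𝓡 → ℝ be a valid function for S, 𝓡. Define ψ*(r) := inf{ψ(r + w) : w ∈ W_S⁺ such that r + w ∈ 𝓡}. Then, taking 𝓟 = 𝓡, every minimal lifting π : 𝓡 → ℝ of ψ satisfies π(r) ≤ ψ*(r) for all r ∈ 𝓡. -/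
open scoped BigOperators
open Pointwise

noncomputable section

open Classical in
lemma key_aux {n : ℕ} (S : Set (Fin n → ℝ)) (R : Set (Fin n → ℝ))
    (psi pi : (Fin n → ℝ) → ℝ)
    (hpi : IsMinimalLiftingOn S R R psi pi)
    (r w : Fin n → ℝ) (hr : r ∈ R) (hw : w ∈ Wplus S) (hrw : r + w ∈ R) :
    pi r ≤ psi (r + w) := by
  set a := min (pi r) (psi (r + w)) with ha
  set pi' : (Fin n → ℝ) → ℝ := fun p => if p = r then a else pi p with hpi'
  have hvalid : ValidPair S R R psi pi' := by
    intro k l rr pp hrr hpp s y hs hmem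
    set T : Finset (Fin l) := Finset.univ.filter (fun j => pp j = r) with hT
    set c : ℝ := ∑ j ∈ T, (y j : ℝ) with hc
    have hc0 : 0 ≤ c := Finset.sum_nonneg (fun j _ => by positivity)
    set A : ℝ := ∑ i, psi (rr i) * s i with hA
    set B : ℝ := ∑ j ∈ Finset.univ.filter (fun j => ¬ pp j = r),
      pi (pp j) * (y j : ℝ) with hB
    set y' : Fin l → ℕ := fun j => if pp j = r then 0 else y j with hy'
    -- splitting of the y-sum of vectors
    have hvec : (∑ j, (y j : ℝ) • pp j)
        = c • r + ∑ j, ((y' j : ℝ)) • pp j := by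
      rw [← Finset.sum_filter_add_sum_filter_not Finset.univ (fun j => pp j = r)
        (fun j => (y j : ℝ) • pp j)]
      rw [← Finset.sum_filter_add_sum_filter_not Finset.univ (fun j => pp j = r)
        (fun j => (y' j : ℝ) • pp j)]
      have h1 : ∑ j ∈ Finset.univ.filter (fun j => pp j = r), ((y' j : ℝ)) • pp j = 0 := by
        apply Finset.sum_eq_zero; intro j hj
        have := (Finset.mem_filter.mp hj).2
        simp [hy', this]
      have h2 : ∑ j ∈ Finset.univ.filter (fun j => ¬ pp j = r), ((y' j : ℝ)) • pp j
          = ∑ j ∈ Finset.univ.filter (fun j => ¬ pp j = r), ((y j : ℝ)) • pp j := by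
        apply Finset.sum_congr rfl; intro j hj
        have := (Finset.mem_filter.mp hj).2
        simp [hy', this]
      have h3 : ∑ j ∈ Finset.univ.filter (fun j => pp j = r), ((y j : ℝ)) • pp j
          = c • r := by
        rw [hc, Finset.sum_smul]
        apply Finset.sum_congr rfl; intro j hj
        rw [(Finset.mem_filter.mp hj).2]
      rw [h1, h2, h3]; abel
    -- the new point is in S
    set N : ℕ := ∑ j ∈ T, y j with hN
    have hcN : c = (N : ℝ) := by rw [hN, Nat.cast_sum]
    have hmem' : (c • (r + w) + ∑ i, s i • rr i) + (∑ j, (y' j : ℝ) • pp j) ∈ S := by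
      have h0 := hw _ hmem N
      have heq : ((∑ i, s i • rr i) + ∑ j, (y j : ℝ) • pp j) + (N : ℝ) • w
          = (c • (r + w) + ∑ i, s i • rr i) + (∑ j, (y' j : ℝ) • pp j) := by
        rw [hvec, ← hcN, smul_add]; abel
      rwa [heq] at h0
    -- apply validity of (psi, pi) with the extra column r + w
    have hineq2 : 1 ≤ A + psi (r + w) * c + B := by
      have h0 := hpi.1 (k + 1) l (Fin.cons (r + w) rr) pp
        (fun i => by
          refine Fin.cases ?_ ?_ i
          · simpa using hrw
          · intro i; simpa using hrr i)
        hpp (Fin.cons c s) y'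
        (fun i => by
          refine Fin.cases ?_ ?_ i
          · simpa using hc0
          · intro i; simpa using hs i)
        (by
          rw [Fin.sum_univ_succ]
          simpa using hmem')
      rw [Fin.sum_univ_succ] at h0
      have hB' : ∑ j, pi (pp j) * (y' j : ℝ) = B := by
        rw [hB, ← Finset.sum_filter_add_sum_filter_not Finset.univ (fun j => pp j = r)
          (fun j => pi (pp j) * (y' j : ℝ))]
        have h1 : ∑ j ∈ Finset.univ.filter (fun j => pp j = r),
            pi (pp j) * (y' j : ℝ) = 0 := by
          apply Finset.sum_eq_zero; intro j hj
          have := (Finset.mem_filter.mp hj).2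
          simp [hy', this]
        have h2 : ∑ j ∈ Finset.univ.filter (fun j => ¬ pp j = r),
            pi (pp j) * (y' j : ℝ)
            = ∑ j ∈ Finset.univ.filter (fun j => ¬ pp j = r),
              pi (pp j) * (y j : ℝ) := by
          apply Finset.sum_congr rfl; intro j hj
          have := (Finset.mem_filter.mp hj).2
          simp [hy', this]
        rw [h1, h2, zero_add]
      rw [hB'] at h0
      simp only [Fin.cons_zero, Fin.cons_succ] at h0
      calc (1:ℝ) ≤ _ := h0
        _ = A + psi (r + w) * c + B := by rw [hA]; ring
    -- the original validity inequality
    have hineq3 : 1 ≤ A + pi r * c + B := by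
      have h0 := hpi.1 k l rr pp hrr hpp s y hs hmem
      have hsplit : ∑ j, pi (pp j) * (y j : ℝ) = pi r * c + B := by
        rw [← Finset.sum_filter_add_sum_filter_not Finset.univ (fun j => pp j = r)
          (fun j => pi (pp j) * (y j : ℝ)), hB]
        congr 1
        rw [hc, Finset.mul_sum]
        apply Finset.sum_congr rfl; intro j hj
        rw [(Finset.mem_filter.mp hj).2]
      rw [hsplit] at h0
      calc (1:ℝ) ≤ _ := h0
        _ = A + pi r * c + B := by ring
    -- conclude
    have hgoal : ∑ j, pi' (pp j) * (y j : ℝ) = a * c + B := by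
      rw [← Finset.sum_filter_add_sum_filter_not Finset.univ (fun j => pp j = r)
        (fun j => pi' (pp j) * (y j : ℝ)), hB]
      congr 1
      · rw [hc, Finset.mul_sum]
        apply Finset.sum_congr rfl; intro j hj
        have hj' := (Finset.mem_filter.mp hj).2
        simp [hpi', hj']
      · apply Finset.sum_congr rfl; intro j hj
        have hj' := (Finset.mem_filter.mp hj).2
        simp [hpi', hj']
    rw [hgoal]
    rcases min_choice (pi r) (psi (r + w)) with h | h
    · rw [ha, h]; linarith
    · rw [ha, h]; linarith
  have hle : ∀ p ∈ R, pi' p ≤ pi p := by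
    intro p hp
    by_cases hpr : p = r
    · subst hpr
      have : pi' p = a := by simp [hpi']
      rw [this, ha]
      exact min_le_left _ _
    · simp [hpi', hpr]
  have := hpi.2 pi' hvalid hle r hr
  have : a = pi r := by simpa [hpi'] using this
  rw [ha] at this
  exact (min_eq_left_iff.mp this)

/-- Proposition 2.1(c): with `P = R`, every minimal lifting `π` of `ψ` satisfies `π ≤ ψ*`. -/
theorem stmt2 {n : ℕ} (hn : 1 ≤ n) (S : Set (Fin n → ℝ)) (hSclosed : IsClosed S)
    (hS0 : (0 : Fin n → ℝ) ∉ S) (R : Set (Fin n → ℝ)) (psi : (Fin n → ℝ) → ℝ)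
    (hpsi : ValidPair S R R psi psi) (pi : (Fin n → ℝ) → ℝ)
    (hpi : IsMinimalLiftingOn S R R psi pi) :
    ∀ r ∈ R, ((pi r : ℝ) : EReal) ≤ psiStarE S R psi r := by
  intro r hr
  apply le_sInf
  rintro x ⟨w, hw, hrw, rfl⟩
  exact_mod_cast EReal.coe_le_coe_iff.mpr (key_aux S R psi pi hpi r w hr hw hrw)
end
end

section
/- Let S ⊆ ℝⁿ be a closed set with 0 ∉ S, let 𝓡, 𝓟 ⊆ ℝⁿ, and let (ψ, π) be a minimal valid pair for S, 𝓡, 𝓟. Then ψ is subadditive over 𝓡, i.e., ψ(r₁ + r₂) ≤ ψ(r₁) + ψ(r₂) whenever r₁, r₂, r₁ + r₂ ∈ 𝓡; π is subadditive over 𝓟, i.e., π(p₁ + p₂) ≤ π(p₁) + π(p₂) whenever p₁, p₂, p₁ + p₂ ∈ 𝓟; and ψ is positively homogeneous over 𝓡, i.e., ψ(λr) = λψ(r) whenever r ∈ 𝓡, λ > 0 and λr ∈ 𝓡. -/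
open scoped BigOperators
open Pointwise

noncomputable section

/-- `(ψ, π)` is a minimal valid pair for `S, R, P`. -/
def IsMinimalValidPair {E : Type*} [AddCommGroup E] [Module ℝ E]
    (S R P : Set E) (psi pi : E → ℝ) : Prop :=
  ValidPair S R P psi pi ∧
    ∀ psi' pi' : E → ℝ, ValidPair S R P psi' pi' →
      (∀ r ∈ R, psi' r ≤ psi r) → (∀ p ∈ P, pi' p ≤ pi p) →
      (∀ r ∈ R, psi' r = psi r) ∧ (∀ p ∈ P, pi' p = pi p)

/-!
If `r₀ = ∑ cⱼ aⱼ` is a nonnegative combination of columns `aⱼ ∈ R`, then every use of the column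
`r₀` in a point of `S` can be replaced by the columns `aⱼ` with weights scaled by the weight of
`r₀`. Hence lowering `ψ(r₀)` to `∑ cⱼ ψ(aⱼ)` keeps the pair valid, and minimality forces
`ψ(r₀) ≤ ∑ cⱼ ψ(aⱼ)`; the same works for `π` with nonnegative integer combinations. Subadditivity
is the case `r₀ = r₁ + r₂`, and homogeneity follows from `ψ(λr) ≤ λψ(r)` applied to `λ` and `λ⁻¹`.
-/

open Finset

section Substitution

variable {E K M ι κ : Type*} [DecidableEq E] [Semiring K] [AddCommMonoid M] [Fintype ι]
  [Fintype κ]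

theorem sum_substitute (x₀ : E) (r : ι → E) (a : κ → E) (s : ι → K) (c : κ → K)
    (F G : E → K → M) (hG : ∀ x, G x 0 = 0) (hFG : ∀ x ≠ x₀, F x = G x)
    (hF : ∀ t, F x₀ t = ∑ j, G (a j) (t * c j)) :
    ∑ i, G (r i) (if r i = x₀ then 0 else s i) +
        ∑ i, ∑ j, G (a j) (if r i = x₀ then s i * c j else 0) =
      ∑ i, F (r i) (s i) := by
  rw [← sum_add_distrib]
  refine sum_congr rfl fun i _ => ?_
  by_cases hi : r i = x₀
  · simp [hi, hG, hF]
  · simp [hi, hG, hFG _ hi]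

end Substitution

section ValidPair

variable {E : Type*} [AddCommGroup E] [Module ℝ E] {S R P : Set E} {psi pi : E → ℝ}

theorem ValidPair.one_le_of_fintype (h : ValidPair S R P psi pi) {ι κ : Type*} [Fintype ι]
    [Fintype κ] (r : ι → E) (p : κ → E) (hr : ∀ i, r i ∈ R) (hp : ∀ j, p j ∈ P)
    (s : ι → ℝ) (y : κ → ℕ) (hs : ∀ i, 0 ≤ s i)
    (hmem : ∑ i, s i • r i + ∑ j, (y j : ℝ) • p j ∈ S) :
    1 ≤ ∑ i, psi (r i) * s i + ∑ j, pi (p j) * (y j : ℝ) := by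
  let e := (Fintype.equivFin ι).symm
  let f := (Fintype.equivFin κ).symm
  have := h _ _ (r ∘ e) (p ∘ f) (fun i => hr _) (fun j => hp _) (s ∘ e) (y ∘ f) (fun i => hs _)
    (by simpa only [Function.comp_apply, e.sum_comp fun i => s i • r i,
      f.sum_comp fun j => (y j : ℝ) • p j] using hmem)
  simpa only [Function.comp_apply, e.sum_comp fun i => psi (r i) * s i,
    f.sum_comp fun j => pi (p j) * (y j : ℝ)] using this

theorem ValidPair.update_psi_sum [DecidableEq E] (h : ValidPair S R P psi pi) {κ : Type*}
    [Fintype κ] (a : κ → E) (c : κ → ℝ) (ha : ∀ j, a j ∈ R) (hc : ∀ j, 0 ≤ c j) :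
    ValidPair S R P (Function.update psi (∑ j, c j • a j) (∑ j, c j * psi (a j))) pi := by
  set x₀ := ∑ j, c j • a j
  intro k l r p hr hp s y hs hmem
  let s' : Fin k ⊕ Fin k × κ → ℝ := Sum.elim (fun i => if r i = x₀ then 0 else s i)
    fun ij => if r ij.1 = x₀ then s ij.1 * c ij.2 else 0
  let col : Fin k ⊕ Fin k × κ → E := Sum.elim r (a ∘ Prod.snd)
  have hsum : ∑ i, s' i • col i = ∑ i, s i • r i := by
    rw [Fintype.sum_sum_type, Fintype.sum_prod_type]
    refine sum_substitute x₀ r a s c (fun x t => t • x) (fun x t => t • x) (fun _ => zero_smul _ _)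
      (fun _ _ => rfl) fun t => ?_
    simp only [x₀, smul_sum, mul_smul]
  have hobj : ∑ i, psi (col i) * s' i =
      ∑ i, Function.update psi x₀ (∑ j, c j * psi (a j)) (r i) * s i := by
    rw [Fintype.sum_sum_type, Fintype.sum_prod_type]
    refine sum_substitute x₀ r a s c (fun x t => Function.update psi x₀ _ x * t)
      (fun x t => psi x * t) (fun _ => mul_zero _)
      (fun x hx => funext fun t => by rw [Function.update_of_ne hx]) fun t => ?_
    simp only [Function.update_self, sum_mul]
    exact sum_congr rfl fun j _ => by ring
  have hs' : ∀ i, 0 ≤ s' i := by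
    rintro (i | ⟨i, j⟩) <;> dsimp only [s', Sum.elim_inl, Sum.elim_inr] <;> split_ifs
    exacts [le_rfl, hs i, mul_nonneg (hs i) (hc j), le_rfl]
  have := h.one_le_of_fintype col p (by rintro (i | ⟨i, j⟩); exacts [hr i, ha j]) hp s' y hs'
    (by rwa [hsum])
  rwa [hobj] at this

theorem ValidPair.update_pi_sum [DecidableEq E] (h : ValidPair S R P psi pi) {κ : Type*}
    [Fintype κ] (b : κ → E) (w : κ → ℕ) (hb : ∀ j, b j ∈ P) :
    ValidPair S R P psi
      (Function.update pi (∑ j, (w j : ℝ) • b j) (∑ j, (w j : ℝ) * pi (b j))) := by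
  set x₀ := ∑ j, (w j : ℝ) • b j
  intro k l r p hr hp s y hs hmem
  let y' : Fin l ⊕ Fin l × κ → ℕ := Sum.elim (fun j => if p j = x₀ then 0 else y j)
    fun ji => if p ji.1 = x₀ then y ji.1 * w ji.2 else 0
  let col : Fin l ⊕ Fin l × κ → E := Sum.elim p (b ∘ Prod.snd)
  have hsum : ∑ j, (y' j : ℝ) • col j = ∑ j, (y j : ℝ) • p j := by
    rw [Fintype.sum_sum_type, Fintype.sum_prod_type]
    refine sum_substitute x₀ p b y w (fun x t => (t : ℝ) • x) (fun x t => (t : ℝ) • x)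
      (fun _ => by simp) (fun _ _ => rfl) fun t => ?_
    simp only [x₀, smul_sum, Nat.cast_mul, mul_smul]
  have hobj : ∑ j, pi (col j) * (y' j : ℝ) =
      ∑ j, Function.update pi x₀ (∑ i, (w i : ℝ) * pi (b i)) (p j) * (y j : ℝ) := by
    rw [Fintype.sum_sum_type, Fintype.sum_prod_type]
    refine sum_substitute x₀ p b y w (fun x t => Function.update pi x₀ _ x * (t : ℝ))
      (fun x t => pi x * (t : ℝ)) (fun _ => by simp)
      (fun x hx => funext fun t => by rw [Function.update_of_ne hx]) fun t => ?_
    simp only [Function.update_self, sum_mul, Nat.cast_mul]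
    exact sum_congr rfl fun i _ => by ring
  have := h.one_le_of_fintype r col hr (by rintro (j | ⟨j, i⟩); exacts [hp j, hb i]) s y' hs
    (by rwa [hsum])
  rwa [hobj] at this

end ValidPair

namespace IsMinimalValidPair

variable {E : Type*} [AddCommGroup E] [Module ℝ E] {S R P : Set E} {psi pi : E → ℝ}

theorem psi_le_of_validPair_update [DecidableEq E] (hmin : IsMinimalValidPair S R P psi pi)
    {x : E} (hx : x ∈ R) {t : ℝ} (ht : ValidPair S R P (Function.update psi x t) pi) :
    psi x ≤ t := by
  by_contra! hlt
  have hle : ∀ r ∈ R, Function.update psi x t r ≤ psi r := fun r _ => by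
    rcases eq_or_ne r x with rfl | hr
    · simpa using hlt.le
    · rw [Function.update_of_ne hr]
  have := (hmin.2 _ _ ht hle fun _ _ => le_rfl).1 x hx
  simp only [Function.update_self] at this
  exact hlt.ne this

theorem pi_le_of_validPair_update [DecidableEq E] (hmin : IsMinimalValidPair S R P psi pi)
    {x : E} (hx : x ∈ P) {t : ℝ} (ht : ValidPair S R P psi (Function.update pi x t)) :
    pi x ≤ t := by
  by_contra! hlt
  have hle : ∀ p ∈ P, Function.update pi x t p ≤ pi p := fun p _ => by
    rcases eq_or_ne p x with rfl | hp
    · simpa using hlt.le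
    · rw [Function.update_of_ne hp]
  have := (hmin.2 _ _ ht (fun _ _ => le_rfl) hle).2 x hx
  simp only [Function.update_self] at this
  exact hlt.ne this

theorem psi_sum_le (hmin : IsMinimalValidPair S R P psi pi) {κ : Type*} [Fintype κ]
    (a : κ → E) (c : κ → ℝ) (ha : ∀ j, a j ∈ R) (hc : ∀ j, 0 ≤ c j)
    (hR : ∑ j, c j • a j ∈ R) :
    psi (∑ j, c j • a j) ≤ ∑ j, c j * psi (a j) := by
  classical
  exact hmin.psi_le_of_validPair_update hR (hmin.1.update_psi_sum a c ha hc)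

theorem pi_sum_le (hmin : IsMinimalValidPair S R P psi pi) {κ : Type*} [Fintype κ]
    (b : κ → E) (w : κ → ℕ) (hb : ∀ j, b j ∈ P) (hP : ∑ j, (w j : ℝ) • b j ∈ P) :
    pi (∑ j, (w j : ℝ) • b j) ≤ ∑ j, (w j : ℝ) * pi (b j) := by
  classical
  exact hmin.pi_le_of_validPair_update hP (hmin.1.update_pi_sum b w hb)

theorem psi_add_le (hmin : IsMinimalValidPair S R P psi pi) {r₁ r₂ : E} (h₁ : r₁ ∈ R)
    (h₂ : r₂ ∈ R) (h₁₂ : r₁ + r₂ ∈ R) : psi (r₁ + r₂) ≤ psi r₁ + psi r₂ := by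
  simpa using hmin.psi_sum_le ![r₁, r₂] 1 (by simp [Fin.forall_fin_two, h₁, h₂])
    (fun _ => zero_le_one) (by simpa using h₁₂)

theorem pi_add_le (hmin : IsMinimalValidPair S R P psi pi) {p₁ p₂ : E} (h₁ : p₁ ∈ P)
    (h₂ : p₂ ∈ P) (h₁₂ : p₁ + p₂ ∈ P) : pi (p₁ + p₂) ≤ pi p₁ + pi p₂ := by
  simpa using hmin.pi_sum_le ![p₁, p₂] 1 (by simp [Fin.forall_fin_two, h₁, h₂])
    (by simpa using h₁₂)

theorem psi_smul_le (hmin : IsMinimalValidPair S R P psi pi) {r : E} (hr : r ∈ R) {lam : ℝ}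
    (hlam : 0 ≤ lam) (hlr : lam • r ∈ R) : psi (lam • r) ≤ lam * psi r := by
  simpa using hmin.psi_sum_le (fun _ : Unit => r) (fun _ => lam) (fun _ => hr) (fun _ => hlam)
    (by simpa using hlr)

theorem psi_smul (hmin : IsMinimalValidPair S R P psi pi) {r : E} (hr : r ∈ R) {lam : ℝ}
    (hlam : 0 < lam) (hlr : lam • r ∈ R) : psi (lam • r) = lam * psi r := by
  refine le_antisymm (hmin.psi_smul_le hr hlam.le hlr) ?_
  have hinv : lam⁻¹ • lam • r = r := inv_smul_smul₀ hlam.ne' r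
  have := hmin.psi_smul_le hlr (inv_nonneg.mpr hlam.le) (by rwa [hinv])
  rw [hinv] at this
  calc lam * psi r ≤ lam * (lam⁻¹ * psi (lam • r)) := by gcongr
    _ = psi (lam • r) := mul_inv_cancel_left₀ hlam.ne' _

end IsMinimalValidPair

theorem stmt3_general {n : ℕ} (S : Set (Fin n → ℝ)) (R P : Set (Fin n → ℝ)) (psi pi : (Fin n → ℝ) → ℝ)
    (hmin : IsMinimalValidPair S R P psi pi) :
    (∀ r1 ∈ R, ∀ r2 ∈ R, r1 + r2 ∈ R → psi (r1 + r2) ≤ psi r1 + psi r2) ∧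
      (∀ p1 ∈ P, ∀ p2 ∈ P, p1 + p2 ∈ P → pi (p1 + p2) ≤ pi p1 + pi p2) ∧
      (∀ r ∈ R, ∀ lam : ℝ, 0 < lam → lam • r ∈ R → psi (lam • r) = lam * psi r) :=
  ⟨fun _ h₁ _ h₂ h₁₂ => hmin.psi_add_le h₁ h₂ h₁₂, fun _ h₁ _ h₂ h₁₂ => hmin.pi_add_le h₁ h₂ h₁₂,
    fun _ hr _ hlam hlr => hmin.psi_smul hr hlam hlr⟩

/-- Theorem 2.2: minimal valid pairs are subadditive, and `ψ` is positively homogeneous. -/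
theorem stmt3 {n : ℕ} (hn : 1 ≤ n) (S : Set (Fin n → ℝ)) (hSclosed : IsClosed S)
    (hS0 : (0 : Fin n → ℝ) ∉ S) (R P : Set (Fin n → ℝ)) (psi pi : (Fin n → ℝ) → ℝ)
    (hmin : IsMinimalValidPair S R P psi pi) :
    (∀ r1 ∈ R, ∀ r2 ∈ R, r1 + r2 ∈ R → psi (r1 + r2) ≤ psi r1 + psi r2) ∧
      (∀ p1 ∈ P, ∀ p2 ∈ P, p1 + p2 ∈ P → pi (p1 + p2) ≤ pi p1 + pi p2) ∧
      (∀ r ∈ R, ∀ lam : ℝ, 0 < lam → lam • r ∈ R → psi (lam • r) = lam * psi r) :=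
  stmt3_general S R P psi pi hmin
end
end

section
/- Let S = (b + ℤⁿ) ∩ Q be a polyhedrally-truncated affine lattice, let B = {r ∈ ℝⁿ : aⁱ·r ≤ 1, i ∈ I} be a maximal S-free convex 0-neighborhood with associated valid function ψ(r) = max_{i∈I} aⁱ·r, and let p* ∈ ℝⁿ. If (x̄, x̄_{n+1}) ∈ S × ℤ₊ is a blocking point for B(V_ψ(p*), p*), then (x̄ − x̄_{n+1}p*, x̄_{n+1}) attains the supremum in V_ψ(p*) = sup{(1 − ψ(w))/N : w ∈ ℝⁿ, N ∈ ℕ, w + Np* ∈ S}. Conversely, if (w, N) ∈ ℝⁿ × ℕ attains this supremum, then (w + Np*, N) is a blocking point for B(V_ψ(p*), p*). -/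
open scoped BigOperators
open Pointwise

noncomputable section

/-- Dot product on `ℝⁿ`. -/
def dotp {n : ℕ} (a b : Fin n → ℝ) : ℝ := ∑ i, a i * b i

/-- The integer points `ℤⁿ ⊆ ℝⁿ`. -/
def Zpts (n : ℕ) : Set (Fin n → ℝ) := {x | ∀ i, ∃ z : ℤ, x i = (z : ℝ)}

/-- `Q` is a rational polyhedron. -/
def IsRatPolyhedron {n : ℕ} (Q : Set (Fin n → ℝ)) : Prop :=
  ∃ (m : ℕ) (A : Fin m → Fin n → ℚ) (c : Fin m → ℚ),
    Q = {x | ∀ i, (∑ j, (A i j : ℝ) * x j) ≤ (c i : ℝ)}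

/-- `B` is a maximal `T`-free convex `0`-neighborhood. -/
def IsMaxFreeNbhd {F : Type*} [AddCommGroup F] [Module ℝ F] [TopologicalSpace F]
    (T B : Set F) : Prop :=
  Convex ℝ B ∧ (0 : F) ∈ interior B ∧ interior B ∩ T = ∅ ∧
    ∀ B' : Set F, Convex ℝ B' → (0 : F) ∈ interior B' → interior B' ∩ T = ∅ → B ⊆ B' → B' = B

/-- `ψ(r) = max_i aⁱ·r`. -/
def psiMax {n : ℕ} {ι : Type} [Fintype ι] [Nonempty ι] (a : ι → Fin n → ℝ)
    (r : Fin n → ℝ) : ℝ :=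
  ⨆ i, dotp (a i) r

/-- The translated cone `B(λ, p*) ⊆ ℝⁿ × ℝ`. -/
def Bcone {n : ℕ} {ι : Type} [Fintype ι] (a : ι → Fin n → ℝ) (lam : ℝ) (p : Fin n → ℝ) :
    Set ((Fin n → ℝ) × ℝ) :=
  {x | ∀ i, dotp (a i) x.1 + (lam - dotp (a i) p) * x.2 ≤ 1}

/-- `ℤ₊` as a subset of `ℝ`. -/
def Znn : Set ℝ := {t | ∃ k : ℕ, t = (k : ℝ)}

/-- `(w, N)` attains the supremum in `V_ψ(p*) = sup {(1 − ψ(w))/N : w + N p* ∈ S}`. -/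
def AttainsSup {n : ℕ} (S : Set (Fin n → ℝ)) (psi : (Fin n → ℝ) → ℝ)
    (pstar w : Fin n → ℝ) (N : ℕ) : Prop :=
  1 ≤ N ∧ w + (N : ℝ) • pstar ∈ S ∧
    (1 - psi w) / (N : ℝ) = Vpsi S psi pstar ∧
    ∀ (w' : Fin n → ℝ) (N' : ℕ), 1 ≤ N' → w' + (N' : ℝ) • pstar ∈ S →
      (1 - psi w') / (N' : ℝ) ≤ (1 - psi w) / (N : ℝ)


section Aux

variable {n : ℕ}

lemma dotp_add' (a x y : Fin n → ℝ) : dotp a (x + y) = dotp a x + dotp a y := by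
  simp [dotp, mul_add, Finset.sum_add_distrib]

lemma dotp_smul' (a : Fin n → ℝ) (c : ℝ) (x : Fin n → ℝ) :
    dotp a (c • x) = c * dotp a x := by
  simp only [dotp, Pi.smul_apply, smul_eq_mul, Finset.mul_sum]
  exact Finset.sum_congr rfl fun i _ => by ring

lemma dotp_sub' (a x y : Fin n → ℝ) : dotp a (x - y) = dotp a x - dotp a y := by
  simp [dotp, mul_sub, Finset.sum_sub_distrib]

lemma dotp_sum' (a : Fin n → ℝ) {k : ℕ} (f : Fin k → Fin n → ℝ) :
    dotp a (∑ i, f i) = ∑ i, dotp a (f i) := by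
  simp only [dotp, Finset.sum_apply, Finset.mul_sum]
  exact Finset.sum_comm

variable {ι : Type} [Fintype ι] [Nonempty ι]

lemma le_psiMax' (a : ι → Fin n → ℝ) (r : Fin n → ℝ) (i : ι) :
    dotp (a i) r ≤ psiMax a r := by
  have hb : BddAbove (Set.range fun i => dotp (a i) r) := (Set.finite_range _).bddAbove
  exact le_ciSup hb i

lemma psiMax_attained' (a : ι → Fin n → ℝ) (r : Fin n → ℝ) :
    ∃ i, psiMax a r = dotp (a i) r := by
  obtain ⟨i, hi⟩ := Finite.exists_max (fun i => dotp (a i) r)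
  exact ⟨i, le_antisymm (ciSup_le hi) (le_psiMax' a r i)⟩

lemma one_le_psiMax_of_mem (a : ι → Fin n → ℝ) {S : Set (Fin n → ℝ)}
    (hfree : interior {r | ∀ i, dotp (a i) r ≤ 1} ∩ S = ∅)
    {x : Fin n → ℝ} (hx : x ∈ S) : 1 ≤ psiMax a x := by
  by_contra h
  push_neg at h
  have hlt : ∀ i, dotp (a i) x < 1 := fun i => lt_of_le_of_lt (le_psiMax' a x i) h
  have hcont : ∀ i : ι, Continuous fun r : Fin n → ℝ => dotp (a i) r := by
    intro i
    unfold dotp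
    exact continuous_finset_sum _ fun j _ => continuous_const.mul (continuous_apply j)
  have hopen : IsOpen {r : Fin n → ℝ | ∀ i, dotp (a i) r < 1} := by
    have heq : {r : Fin n → ℝ | ∀ i, dotp (a i) r < 1}
        = ⋂ i, {r | dotp (a i) r < 1} := by
      ext r; simp
    rw [heq]
    exact isOpen_iInter_of_finite fun i => isOpen_lt (hcont i) continuous_const
  have hsub : {r : Fin n → ℝ | ∀ i, dotp (a i) r < 1} ⊆ {r | ∀ i, dotp (a i) r ≤ 1} :=
    fun r hr i => (hr i).le
  have hxint : x ∈ interior {r | ∀ i, dotp (a i) r ≤ 1} :=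
    interior_maximal hsub hopen hlt
  exact Set.eq_empty_iff_forall_notMem.mp hfree x ⟨hxint, hx⟩

lemma psiMax_valid (a : ι → Fin n → ℝ) {S : Set (Fin n → ℝ)}
    (hfree : interior {r | ∀ i, dotp (a i) r ≤ 1} ∩ S = ∅) :
    ValidPair S Set.univ Set.univ (psiMax a) (psiMax a) := by
  intro k l r p _ _ s y hs hmem
  set x := (∑ i, s i • r i) + (∑ j, (y j : ℝ) • p j) with hx
  obtain ⟨i0, hi0⟩ := psiMax_attained' a x
  have h1 : (1:ℝ) ≤ psiMax a x := one_le_psiMax_of_mem a hfree hmem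
  rw [hi0] at h1
  have hdot : dotp (a i0) x
      = (∑ i, s i * dotp (a i0) (r i)) + (∑ j, (y j : ℝ) * dotp (a i0) (p j)) := by
    rw [hx, dotp_add', dotp_sum', dotp_sum']
    simp [dotp_smul']
  have h2 : (∑ i, s i * dotp (a i0) (r i)) ≤ ∑ i, psiMax a (r i) * s i :=
    Finset.sum_le_sum fun i _ => by
      rw [mul_comm]
      exact mul_le_mul_of_nonneg_right (le_psiMax' a (r i) i0) (hs i)
  have h3 : (∑ j, (y j : ℝ) * dotp (a i0) (p j)) ≤ ∑ j, psiMax a (p j) * (y j : ℝ) :=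
    Finset.sum_le_sum fun j _ => by
      rw [mul_comm]
      exact mul_le_mul_of_nonneg_right (le_psiMax' a (p j) i0) (Nat.cast_nonneg _)
  calc (1:ℝ) ≤ dotp (a i0) x := h1
    _ = _ := hdot
    _ ≤ _ := add_le_add h2 h3

lemma lifting_lb {S : Set (Fin n → ℝ)} {a : ι → Fin n → ℝ} {f : (Fin n → ℝ) → ℝ}
    (hf : IsLifting S (psiMax a) f) {w p : Fin n → ℝ} {N : ℕ} (hN : 1 ≤ N)
    (hmem : w + (N : ℝ) • p ∈ S) : (1 - psiMax a w) / N ≤ f p := by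
  have hNpos : (0:ℝ) < N := by exact_mod_cast hN
  have h := hf 1 1 (fun _ => w) (fun _ => p) (fun _ => trivial) (fun _ => trivial)
    (fun _ => (1:ℝ)) (fun _ => N) (fun _ => zero_le_one)
    (by simpa using hmem)
  simp only [Fin.sum_univ_one] at h
  rw [div_le_iff₀ hNpos]
  nlinarith [h]

lemma zorn_min {α : Type*} [Preorder α] (s : Set α)
    (ih : ∀ c ⊆ s, IsChain (· ≤ ·) c → ∀ y ∈ c, ∃ lb ∈ s, ∀ z ∈ c, lb ≤ z)
    (x : α) (hxs : x ∈ s) :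
    ∃ m, m ≤ x ∧ m ∈ s ∧ ∀ z ∈ s, z ≤ m → m ≤ z := by
  obtain ⟨m, hxm, hm⟩ := zorn_le_nonempty₀ (α := αᵒᵈ) s
    (fun c hcs hc y hy => ih c hcs hc.symm y hy) x hxs
  exact ⟨m, hxm, hm.1, fun z hz hzm => hm.2 hz hzm⟩

lemma chain_min {α : Type*} [Preorder α] {c : Set α} (hc : IsChain (· ≤ ·) c)
    {y : α} (hy : y ∈ c) :
    ∀ (l : ℕ) (f : Fin l → α), (∀ j, f j ∈ c) → ∃ m ∈ c, ∀ j, m ≤ f j := by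
  intro l
  induction l with
  | zero => exact fun f _ => ⟨y, hy, fun j => j.elim0⟩
  | succ l ih =>
    intro f hf
    obtain ⟨m, hmc, hm⟩ := ih (fun j => f j.succ) (fun j => hf _)
    rcases eq_or_ne m (f 0) with h | h
    · exact ⟨m, hmc, fun j => Fin.cases h.le (fun j => hm j) j⟩
    · rcases hc hmc (hf 0) h with h' | h'
      · exact ⟨m, hmc, fun j => Fin.cases h' hm j⟩
      · exact ⟨f 0, hf 0, fun j => Fin.cases le_rfl (fun j => h'.trans (hm j)) j⟩

lemma exists_minimal_lifting {S : Set (Fin n → ℝ)} {a : ι → Fin n → ℝ}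
    (hfree : interior {r | ∀ i, dotp (a i) r ≤ 1} ∩ S = ∅)
    (hSne : S.Nonempty) :
    ∃ pim, IsMinimalLifting S (psiMax a) pim := by
  obtain ⟨s0, hs0⟩ := hSne
  set ψ := psiMax a with hψ
  set L : Set ((Fin n → ℝ) → ℝ) := {f | IsLifting S ψ f ∧ f ≤ ψ} with hL
  have hψL : ψ ∈ L := ⟨psiMax_valid a hfree, le_rfl⟩
  have hlb : ∀ f ∈ L, ∀ q, 1 - ψ (s0 - q) ≤ f q := by
    intro f hf q
    have h := lifting_lb (a := a) hf.1 (le_refl 1) (p := q) (w := s0 - q)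
      (by simpa using hs0)
    simpa using h
  have hchains : ∀ c ⊆ L, IsChain (· ≤ ·) c → ∀ y ∈ c, ∃ lb ∈ L, ∀ z ∈ c, lb ≤ z := by
    intro c hcL hchain y hy
    set g : (Fin n → ℝ) → ℝ := fun q => sInf ((fun f => f q) '' c) with hg
    have hne : ∀ q, ((fun f => f q) '' c).Nonempty := fun q => ⟨y q, ⟨y, hy, rfl⟩⟩
    have hbdd : ∀ q, BddBelow ((fun f => f q) '' c) := fun q =>
      ⟨1 - ψ (s0 - q), by rintro _ ⟨f, hfc, rfl⟩; exact hlb f (hcL hfc) q⟩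
    have hgle : ∀ f ∈ c, g ≤ f := fun f hfc q => csInf_le (hbdd q) ⟨f, hfc, rfl⟩
    refine ⟨g, ⟨?_, (hgle y hy).trans (hcL hy).2⟩, hgle⟩
    intro k l r p hr hp s yv hs hmem
    have key : ∀ ε > (0:ℝ),
        1 - ε ≤ (∑ i, ψ (r i) * s i) + (∑ j, g (p j) * (yv j : ℝ)) := by
      intro ε hε
      have hsumy : 0 ≤ ∑ j, (yv j : ℝ) := Finset.sum_nonneg fun j _ => Nat.cast_nonneg _
      set ε' := ε / ((∑ j, (yv j : ℝ)) + 1) with hε'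
      have hε'pos : 0 < ε' := div_pos hε (by linarith)
      have hch : ∀ j : Fin l, ∃ f ∈ c, f (p j) < g (p j) + ε' := by
        intro j
        obtain ⟨v, ⟨f, hfc, rfl⟩, hv⟩ :=
          exists_lt_of_csInf_lt (hne (p j)) (lt_add_of_pos_right (g (p j)) hε'pos)
        exact ⟨f, hfc, hv⟩
      choose piF hpiFc hpiFlt using hch
      obtain ⟨m', hm'c, hm'⟩ := chain_min hchain hy l piF hpiFc
      have h1 := (hcL hm'c).1 k l r p hr hp s yv hs hmem
      have h2 : (∑ j, m' (p j) * (yv j : ℝ))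
          ≤ (∑ j, g (p j) * (yv j : ℝ)) + ε' * (∑ j, (yv j : ℝ)) := by
        rw [Finset.mul_sum, ← Finset.sum_add_distrib]
        refine Finset.sum_le_sum fun j _ => ?_
        have hle : m' (p j) ≤ g (p j) + ε' := (hm' j (p j)).trans (hpiFlt j).le
        nlinarith [Nat.cast_nonneg (α := ℝ) (yv j)]
      have h3 : ε' * (∑ j, (yv j : ℝ)) ≤ ε := by
        rw [hε', div_mul_eq_mul_div, div_le_iff₀ (by linarith : (0:ℝ) < (∑ j, (yv j : ℝ)) + 1)]
        nlinarith
      linarith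
    linarith [le_of_forall_sub_le key]
  obtain ⟨m, hmψ, hmL, hmmin⟩ := zorn_min L hchains ψ hψL
  refine ⟨m, hmL.1, ?_⟩
  intro f' hf' hle
  have hf'L : f' ∈ L := ⟨hf', hle.trans hmL.2⟩
  exact le_antisymm hle (hmmin f' hf'L hle)

lemma key_star {S : Set (Fin n → ℝ)} {a : ι → Fin n → ℝ}
    (hfree : interior {r | ∀ i, dotp (a i) r ≤ 1} ∩ S = ∅)
    (pstar : Fin n → ℝ) {w : Fin n → ℝ} {N : ℕ} (hN : 1 ≤ N)
    (hmem : w + (N : ℝ) • pstar ∈ S) :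
    (1 - psiMax a w) / N ≤ Vpsi S (psiMax a) pstar := by
  have hSne : S.Nonempty := ⟨_, hmem⟩
  obtain ⟨f0, hf0⟩ := exists_minimal_lifting hfree hSne
  refine le_csInf ⟨f0 pstar, f0, hf0, rfl⟩ ?_
  rintro v ⟨f, hf, rfl⟩
  exact lifting_lb hf.1 hN hmem

end Aux

/-- Lemma 4.2: blocking points of `B(V_ψ(p*), p*)` correspond exactly to maximizers of
the Dey–Wolsey formula for `V_ψ(p*)`. -/
theorem stmt6 {n : ℕ} (hn : 1 ≤ n) (b : Fin n → ℝ) (hb : b ∉ Zpts n)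
    (Q : Set (Fin n → ℝ)) (hQ : IsRatPolyhedron Q) (S : Set (Fin n → ℝ))
    (hS : S = {x | x - b ∈ Zpts n} ∩ Q)
    {ι : Type} [Fintype ι] [Nonempty ι] (a : ι → Fin n → ℝ) (B : Set (Fin n → ℝ))
    (hB : B = {r | ∀ i, dotp (a i) r ≤ 1}) (hmax : IsMaxFreeNbhd S B)
    (pstar : Fin n → ℝ) :
    (∀ (xb : Fin n → ℝ) (N : ℕ), 1 ≤ N → xb ∈ S →
        ((xb, (N : ℝ)) : (Fin n → ℝ) × ℝ) ∈ Bcone a (Vpsi S (psiMax a) pstar) pstar →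
        AttainsSup S (psiMax a) pstar (xb - (N : ℝ) • pstar) N) ∧
      (∀ (w : Fin n → ℝ) (N : ℕ), AttainsSup S (psiMax a) pstar w N →
        w + (N : ℝ) • pstar ∈ S ∧
          ((w + (N : ℝ) • pstar, (N : ℝ)) : (Fin n → ℝ) × ℝ) ∈
            Bcone a (Vpsi S (psiMax a) pstar) pstar)  := by
  have hfree : interior {r | ∀ i, dotp (a i) r ≤ 1} ∩ S = ∅ := by
    rw [← hB]; exact hmax.2.2.1
  constructor
  · intro xb N hN hxb hcone
    have hNpos : (0:ℝ) < N := by exact_mod_cast hN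
    set w := xb - (N:ℝ) • pstar with hw
    have hws : w + (N:ℝ) • pstar = xb := by rw [hw]; abel
    have hwmem : w + (N:ℝ) • pstar ∈ S := hws ▸ hxb
    simp only [Bcone, Set.mem_setOf_eq] at hcone
    have hpsiw : psiMax a w ≤ 1 - Vpsi S (psiMax a) pstar * N := by
      obtain ⟨i, hi⟩ := psiMax_attained' a w
      rw [hi]
      have hc := hcone i
      have hd : dotp (a i) w = dotp (a i) xb - (N:ℝ) * dotp (a i) pstar := by
        rw [hw, dotp_sub', dotp_smul']
      rw [hd]
      nlinarith [hc]
    have hle : (1 - psiMax a w) / N ≤ Vpsi S (psiMax a) pstar :=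
      key_star hfree pstar hN hwmem
    have hge : Vpsi S (psiMax a) pstar ≤ (1 - psiMax a w) / N := by
      rw [le_div_iff₀ hNpos]; linarith
    have heq : (1 - psiMax a w) / N = Vpsi S (psiMax a) pstar := le_antisymm hle hge
    exact ⟨hN, hwmem, heq,
      fun w' N' hN' hmem' => (key_star hfree pstar hN' hmem').trans heq.ge⟩
  · intro w N hAtt
    obtain ⟨hN, hmem, heq, _⟩ := hAtt
    refine ⟨hmem, ?_⟩
    have hNpos : (0:ℝ) < N := by exact_mod_cast hN
    have h1 : psiMax a w = 1 - Vpsi S (psiMax a) pstar * N := by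
      rw [div_eq_iff hNpos.ne'] at heq
      linarith
    simp only [Bcone, Set.mem_setOf_eq]
    intro i
    have h2 : dotp (a i) w ≤ psiMax a w := le_psiMax' a w i
    have hd : dotp (a i) (w + (N:ℝ) • pstar)
        = dotp (a i) w + (N:ℝ) * dotp (a i) pstar := by
      rw [dotp_add', dotp_smul']
    rw [hd]
    nlinarith
end
end

section
/- Let S = (b + ℤⁿ) ∩ Q be a polyhedrally-truncated affine lattice, B = {r : aⁱ·r ≤ 1, i ∈ I} a maximal S-free convex 0-neighborhood with ψ(r) = max_{i∈I} aⁱ·r, and p* ∈ ℝⁿ. Then for every π ∈ 𝓛_{ψ,p*} and every p ∈ ℝⁿ, π(p) ≤ ψ*_{B(V_ψ(p*),p*)}((p, 0)). -/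
open scoped BigOperators
open Pointwise

noncomputable section

/-- `ψ_{B(λ,p*)}` on `ℝⁿ × ℝ`. -/
def psiB {n : ℕ} {ι : Type} [Fintype ι] [Nonempty ι] (a : ι → Fin n → ℝ) (lam : ℝ)
    (p : Fin n → ℝ) (x : (Fin n → ℝ) × ℝ) : ℝ :=
  ⨆ i, (dotp (a i) x.1 + (lam - dotp (a i) p) * x.2)

/-- `ψ*_{B(λ,p*)}(x) = inf {ψ_{B(λ,p*)}(x + u) : u ∈ W⁺_{S×ℤ₊}}`, as an extended real. -/
def psiStarB {n : ℕ} {ι : Type} [Fintype ι] [Nonempty ι] (S : Set (Fin n → ℝ))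
    (a : ι → Fin n → ℝ) (lam : ℝ) (p : Fin n → ℝ) (x : (Fin n → ℝ) × ℝ) : EReal :=
  sInf {v : EReal | ∃ u ∈ Wplus (S ×ˢ Znn), v = ((psiB a lam p (x + u) : ℝ) : EReal)}


lemma dotp_sub_smul' {n : ℕ} (a x y : Fin n → ℝ) (c : ℝ) :
    dotp a (x - c • y) = dotp a x - c * dotp a y := by
  unfold dotp
  rw [Finset.mul_sum, ← Finset.sum_sub_distrib]
  refine Finset.sum_congr rfl fun i _ => ?_
  simp [Pi.sub_apply, mul_sub]
  ring

lemma key_aux' {E : Type*} [AddCommGroup E] [Module ℝ E] (S : Set E) (psi pi : E → ℝ)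
    (hmin : IsMinimalLifting S psi pi) (p pstar w : E) (k : ℕ)
    (hw : ∀ s ∈ S, ∀ lam : ℕ, s + (lam : ℝ) • w ∈ S) :
    pi p ≤ psi (p + w - (k : ℝ) • pstar) + k * pi pstar := by
  classical
  set ρ : E := p + w - (k : ℝ) • pstar with hρ
  set c : ℝ := psi ρ + k * pi pstar with hc
  by_contra hlt
  push_neg at hlt
  set pi' : E → ℝ := fun q => if q = p then c else pi q with hpi'
  have hle : pi' ≤ pi := by
    intro q
    by_cases hq : q = p
    · subst hq; simp only [pi', if_pos rfl]; exact hlt.le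
    · simp [pi', hq]
  have hlift : IsLifting S psi pi' := by
    intro k' l' r pv _ _ s y hs hsum
    set m : ℕ := ∑ j, if pv j = p then y j else 0 with hm
    have hmr : (m : ℝ) = ∑ j, if pv j = p then (y j : ℝ) else 0 := by
      rw [hm, Nat.cast_sum]
      exact Finset.sum_congr rfl fun j _ => by split <;> simp
    have claimA : (∑ j, ((if pv j = p then 0 else y j : ℕ) : ℝ) • pv j) + (m : ℝ) • p
        = ∑ j, (y j : ℝ) • pv j := by
      rw [hmr, Finset.sum_smul]
      rw [← Finset.sum_add_distrib]
      refine Finset.sum_congr rfl fun j _ => ?_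
      by_cases hj : pv j = p
      · simp [hj]
      · simp [hj]
    have hsum' : (∑ i : Fin (k' + 1), (Fin.snoc s (m : ℝ) : Fin (k'+1) → ℝ) i •
          (Fin.snoc r ρ : Fin (k'+1) → E) i)
        + (∑ j : Fin (l' + 1), (((Fin.snoc (fun j => if pv j = p then 0 else y j) (k * m) :
            Fin (l'+1) → ℕ) j : ℝ)) • (Fin.snoc pv pstar : Fin (l'+1) → E) j) ∈ S := by
      have e1 : (∑ i : Fin (k' + 1), (Fin.snoc s (m : ℝ) : Fin (k'+1) → ℝ) i •
          (Fin.snoc r ρ : Fin (k'+1) → E) i) = (∑ i, s i • r i) + (m : ℝ) • ρ := by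
        rw [Fin.sum_univ_castSucc]; simp
      have e2 : (∑ j : Fin (l' + 1), (((Fin.snoc (fun j => if pv j = p then 0 else y j) (k * m) :
            Fin (l'+1) → ℕ) j : ℝ)) • (Fin.snoc pv pstar : Fin (l'+1) → E) j)
          = (∑ j, ((if pv j = p then 0 else y j : ℕ) : ℝ) • pv j) + ((k * m : ℕ) : ℝ) • pstar := by
        rw [Fin.sum_univ_castSucc]; simp
      rw [e1, e2]
      have hrearrange :
          (∑ i, s i • r i) + (m : ℝ) • ρ
            + ((∑ j, ((if pv j = p then 0 else y j : ℕ) : ℝ) • pv j) + ((k * m : ℕ) : ℝ) • pstar)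
          = ((∑ i, s i • r i) + (∑ j, (y j : ℝ) • pv j)) + (m : ℝ) • w := by
        rw [← claimA, hρ]
        push_cast
        rw [smul_sub, smul_add, smul_smul, mul_comm (m:ℝ) (k:ℝ)]
        abel
      rw [hrearrange]
      exact hw _ hsum m
    have hval := hmin.1 (k' + 1) (l' + 1)
      (Fin.snoc r ρ) (Fin.snoc pv pstar)
      (fun _ => Set.mem_univ _) (fun _ => Set.mem_univ _)
      (Fin.snoc s (m : ℝ)) (Fin.snoc (fun j => if pv j = p then 0 else y j) (k * m))
      (fun i => by
        refine Fin.lastCases ?_ ?_ i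
        · simp
        · intro i; simpa using hs i)
      hsum'
    rw [Fin.sum_univ_castSucc, Fin.sum_univ_castSucc] at hval
    simp only [Fin.snoc_castSucc, Fin.snoc_last] at hval
    have claimB : (∑ j, pi' (pv j) * (y j : ℝ))
        = (∑ j, pi (pv j) * ((if pv j = p then 0 else y j : ℕ) : ℝ)) + pi pstar * ((k * m : ℕ) : ℝ)
          + psi ρ * (m : ℝ) := by
      have : ∀ j, pi' (pv j) * (y j : ℝ)
          = pi (pv j) * ((if pv j = p then 0 else y j : ℕ) : ℝ)
            + (if pv j = p then c * (y j : ℝ) else 0) := by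
        intro j
        by_cases hj : pv j = p
        · simp [pi', hj]
        · simp [pi', hj]
      rw [Finset.sum_congr rfl fun j _ => this j, Finset.sum_add_distrib]
      have : (∑ j, if pv j = p then c * (y j : ℝ) else 0) = c * (m : ℝ) := by
        rw [hmr, Finset.mul_sum]
        exact Finset.sum_congr rfl fun j _ => by split <;> simp
      rw [this, hc]
      push_cast
      ring
    rw [claimB]
    calc (1 : ℝ) ≤ _ := hval
    _ = _ := by ring
  have := hmin.2 pi' hlift hle
  have : pi' p = pi p := by rw [this]
  rw [hpi'] at this
  simp only [if_pos rfl] at this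
  exact absurd this (ne_of_lt hlt)

/-- Theorem 4.7 (universal upper bound): every `π ∈ 𝓛_{ψ,p*}` satisfies
`π(p) ≤ ψ*_{B(V_ψ(p*),p*)}((p,0))` for all `p`. -/
theorem stmt9 {n : ℕ} (hn : 1 ≤ n) (b : Fin n → ℝ) (hb : b ∉ Zpts n)
    (Q : Set (Fin n → ℝ)) (hQ : IsRatPolyhedron Q) (S : Set (Fin n → ℝ))
    (hS : S = {x | x - b ∈ Zpts n} ∩ Q)
    {ι : Type} [Fintype ι] [Nonempty ι] (a : ι → Fin n → ℝ) (B : Set (Fin n → ℝ))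
    (hB : B = {r | ∀ i, dotp (a i) r ≤ 1}) (hmax : IsMaxFreeNbhd S B)
    (pstar : Fin n → ℝ) (pi : (Fin n → ℝ) → ℝ)
    (hpi : pi ∈ LiftSet S (psiMax a) pstar) :
    ∀ p : Fin n → ℝ,
      ((pi p : ℝ) : EReal) ≤ psiStarB S a (Vpsi S (psiMax a) pstar) pstar ((p, (0 : ℝ))) := by
  classical
  intro p
  obtain ⟨hminl, hvp⟩ := hpi
  set lam := Vpsi S (psiMax a) pstar with hlam
  rcases Set.eq_empty_or_nonempty S with hSe | ⟨s0, hs0⟩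
  · exfalso
    have hlift' : IsLifting S (psiMax a) (fun q => pi q - 1) := by
      intro k l r pv hr hp s y hs hsum
      rw [hSe] at hsum
      exact absurd hsum (Set.notMem_empty _)
    have heq := hminl.2 _ hlift' (fun q => by simp)
    have := congrFun heq p
    simp at this
  refine le_sInf ?_
  rintro v ⟨⟨w, z⟩, hu, rfl⟩
  rw [EReal.coe_le_coe_iff]
  have hz : z ∈ Znn := by
    have h1 := hu (s0, (0 : ℝ)) (Set.mem_prod.2 ⟨hs0, ⟨0, by simp⟩⟩) 1
    have h2 := (Set.mem_prod.1 h1).2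
    simpa using h2
  obtain ⟨k, rfl⟩ := hz
  have hw : ∀ s ∈ S, ∀ l : ℕ, s + (l : ℝ) • w ∈ S := by
    intro s hs l
    have h1 := hu (s, (0 : ℝ)) (Set.mem_prod.2 ⟨hs, ⟨0, by simp⟩⟩) l
    exact (Set.mem_prod.1 h1).1
  have hk := key_aux' S (psiMax a) pi hminl p pstar w k hw
  rw [hvp] at hk
  have hrw : psiMax a (p + w - (k : ℝ) • pstar) + (k : ℝ) * lam
      = psiB a lam pstar ((p, (0 : ℝ)) + (w, (k : ℝ))) := by
    unfold psiMax psiB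
    rw [ciSup_add (Set.finite_range _).bddAbove]
    refine iSup_congr fun i => ?_
    have : ((p, (0 : ℝ)) + (w, (k : ℝ))).1 = p + w := rfl
    rw [this]
    have : ((p, (0 : ℝ)) + (w, (k : ℝ))).2 = (0 : ℝ) + k := rfl
    rw [this, dotp_sub_smul']
    ring
  calc pi p ≤ psiMax a (p + w - (k : ℝ) • pstar) + (k : ℝ) * lam := hk
  _ = _ := hrw
end
end

section
/- Let S = (b + ℤⁿ) ∩ Q be a polyhedrally-truncated affine lattice, B = {r : aⁱ·r ≤ 1, i ∈ I} a maximal S-free convex 0-neighborhood with ψ(r) = max_{i∈I} aⁱ·r, and p* ∈ ℝⁿ. Let (x̄, x̄_{n+1}) ∈ (S × ℤ₊) ∩ B(V_ψ(p*), p*) be a blocking point and t ∈ ℝ. Then H_t ∩ R_{B(V_ψ(p*),p*)}(x̄, x̄_{n+1}) = (H_0 ∩ R_{B(V_ψ(p*),p*)}(x̄, x̄_{n+1})) + t(p*, 1), where H_t := {(x, t) : x ∈ ℝⁿ}. -/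
open scoped BigOperators
open Pointwise

noncomputable section

/-- The linear functional `(aⁱ, λ − aⁱ·p*)` evaluated on `ℝⁿ × ℝ`. -/
def coneFun {n : ℕ} {ι : Type} (a : ι → Fin n → ℝ) (lam : ℝ) (p : Fin n → ℝ) (i : ι)
    (x : (Fin n → ℝ) × ℝ) : ℝ :=
  dotp (a i) x.1 + (lam - dotp (a i) p) * x.2

/-- The spindle `R_{B(λ,p*)}(x̄)` in `ℝⁿ × ℝ`, with maximizing index `k`. -/
def spindleCone {n : ℕ} {ι : Type} (a : ι → Fin n → ℝ) (lam : ℝ) (p : Fin n → ℝ) (k : ι)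
    (xbar : (Fin n → ℝ) × ℝ) : Set ((Fin n → ℝ) × ℝ) :=
  {x | ∀ i, coneFun a lam p i x - coneFun a lam p k x ≤ 0 ∧
    coneFun a lam p i (xbar - x) - coneFun a lam p k (xbar - x) ≤ 0}


lemma dotp_add_smul' {n : ℕ} (a u v : Fin n → ℝ) (t : ℝ) :
    dotp a (u + t • v) = dotp a u + t * dotp a v := by
  simp [dotp, Finset.mul_sum, ← Finset.sum_add_distrib]
  congr 1; funext i; ring

lemma coneFun_shift {n : ℕ} {ι : Type} (a : ι → Fin n → ℝ) (lam : ℝ) (p : Fin n → ℝ)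
    (i : ι) (x : (Fin n → ℝ) × ℝ) (t : ℝ) :
    coneFun a lam p i (x + t • ((p, (1 : ℝ)) : (Fin n → ℝ) × ℝ)) =
      coneFun a lam p i x + t * lam := by
  simp only [coneFun, Prod.fst_add, Prod.snd_add, Prod.smul_fst, Prod.smul_snd, smul_eq_mul,
    mul_one]
  rw [dotp_add_smul']
  ring

lemma spindle_shift {n : ℕ} {ι : Type} (a : ι → Fin n → ℝ) (lam : ℝ) (p : Fin n → ℝ)
    (k : ι) (xbar x : (Fin n → ℝ) × ℝ) (t : ℝ)
    (hx : x ∈ spindleCone a lam p k xbar) :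
    x + t • ((p, (1 : ℝ)) : (Fin n → ℝ) × ℝ) ∈ spindleCone a lam p k xbar := by
  intro i
  obtain ⟨h1, h2⟩ := hx i
  constructor
  · rw [coneFun_shift, coneFun_shift]; linarith
  · have : xbar - (x + t • ((p, (1 : ℝ)) : (Fin n → ℝ) × ℝ)) =
        (xbar - x) + (-t) • ((p, (1 : ℝ)) : (Fin n → ℝ) × ℝ) := by
      rw [Prod.smul_mk]; simp [neg_smul, Prod.ext_iff]; constructor <;> abel
    rw [this, coneFun_shift, coneFun_shift]; linarith

/-- Proposition 4.9: the height-`t` slice of the spindle of a blocking point is the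
translate of the height-`0` slice by `t (p*, 1)`. -/
theorem stmt10 {n : ℕ} (hn : 1 ≤ n) (b : Fin n → ℝ) (hb : b ∉ Zpts n)
    (Q : Set (Fin n → ℝ)) (hQ : IsRatPolyhedron Q) (S : Set (Fin n → ℝ))
    (hS : S = {x | x - b ∈ Zpts n} ∩ Q)
    {ι : Type} [Fintype ι] [Nonempty ι] (a : ι → Fin n → ℝ) (B : Set (Fin n → ℝ))
    (hB : B = {r | ∀ i, dotp (a i) r ≤ 1}) (hmax : IsMaxFreeNbhd S B)
    (pstar : Fin n → ℝ)
    (xb : Fin n → ℝ) (N : ℕ) (hN : 1 ≤ N) (hxbS : xb ∈ S)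
    (hblock : ((xb, (N : ℝ)) : (Fin n → ℝ) × ℝ) ∈
      Bcone a (Vpsi S (psiMax a) pstar) pstar)
    (k : ι)
    (hk : ∀ i, coneFun a (Vpsi S (psiMax a) pstar) pstar i ((xb, (N : ℝ))) ≤
      coneFun a (Vpsi S (psiMax a) pstar) pstar k ((xb, (N : ℝ))))
    (t : ℝ) :
    {x : (Fin n → ℝ) × ℝ | x.2 = t} ∩
        spindleCone a (Vpsi S (psiMax a) pstar) pstar k ((xb, (N : ℝ))) =
      (fun z => z + t • ((pstar, (1 : ℝ)) : (Fin n → ℝ) × ℝ)) ''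
        ({x : (Fin n → ℝ) × ℝ | x.2 = 0} ∩
          spindleCone a (Vpsi S (psiMax a) pstar) pstar k ((xb, (N : ℝ)))) := by
  ext x
  constructor
  · rintro ⟨hxt, hxs⟩
    refine ⟨x + (-t) • ((pstar, (1 : ℝ)) : (Fin n → ℝ) × ℝ), ⟨?_, spindle_shift _ _ _ _ _ _ _ hxs⟩, ?_⟩
    · show x.2 + (-t) • (1:ℝ) = 0
      simp only [Set.mem_setOf_eq] at hxt
      simp [hxt]
    · simp [add_assoc, ← add_smul]
  · rintro ⟨y, ⟨hy0, hys⟩, rfl⟩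
    exact ⟨by simp [Prod.snd_add, Set.mem_setOf_eq.mp hy0], spindle_shift _ _ _ _ _ _ _ hys⟩
end
end

section
/- Let S = (b + ℤⁿ) ∩ Q be a polyhedrally-truncated affine lattice, B = {r : aⁱ·r ≤ 1, i ∈ I} a maximal S-free convex 0-neighborhood with ψ(r) = max_{i∈I} aⁱ·r, and p* ∈ ℝⁿ. Let (w, N) ∈ ℝⁿ × ℕ attain the supremum in V_ψ(p*) = sup{(1 − ψ(w))/N : w + Np* ∈ S}. Then (R_B(w) ∪ (R_B(w) + p*) ∪ ⋯ ∪ (R_B(w) + Np*)) + W_S ⊆ 𝓕_{ψ,p*}. Moreover, for every π ∈ 𝓛_{ψ,p*}, every p ∈ ⋃_{i=0}^{N}(R_B(w) + i·p*), and every u ∈ W_S, one has π(p + u) = π(p) = ψ*_{B(V_ψ(p*),p*)}((p, 0)). -/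
/-!
A minimal lifting `π` cannot be lowered, so whenever `min π g` is again a lifting we get `π ≤ g`.
This applies to `g q = ψ(q + u - m x) + m π(x)` for `u ∈ W⁺_S`: trading the point `q` for the ray
`q + u - m x` and `m` copies of `x` only translates a combination of `S` by a multiple of `u`.
With `x = q + u`, `m = 1` this gives `π q ≤ π (q + u)`, hence `W_S`-periodicity.

For `r ∈ R_B(w)` and `j ≤ N`, the case `u = 0`, `x = p*`, `m = j` bounds `π(r + j p*)` above by
`ψ(r) + j V`. Validity on `w + N p* = (w - r) + (r + j p*) + (N - j) p*` gives the same value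
from below, because `ψ` is additive on the spindle and `1 - ψ(w) = N V`. This value is
`ψ_{B(V,p*)}((r + j p*, j))`, attained by `ψ*` at `(0, j) ∈ W⁺_{S×ℤ₊}`, while the first bound
shows `π ≤ ψ*` everywhere.
-/

open scoped BigOperators
open Pointwise

noncomputable section

/-- The spindle `R_B(x)` in `ℝⁿ`, with maximizing index `k`. -/
def spindleK {n : ℕ} {ι : Type} [Fintype ι] (a : ι → Fin n → ℝ) (k : ι) (x : Fin n → ℝ) :
    Set (Fin n → ℝ) :=
  {r | ∀ i, dotp (a i - a k) r ≤ 0 ∧ dotp (a i - a k) (x - r) ≤ 0}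

section Lifting

variable {E : Type*} [AddCommGroup E] [Module ℝ E] {S : Set E} {psi pi : E → ℝ}

theorem IsLifting.one_le {α β : Type*} [Fintype α] [Fintype β] (h : IsLifting S psi pi)
    (r : α → E) (s : α → ℝ) (p : β → E) (y : β → ℕ) (hs : ∀ i, 0 ≤ s i)
    (hmem : (∑ i, s i • r i) + (∑ j, (y j : ℝ) • p j) ∈ S) :
    1 ≤ (∑ i, psi (r i) * s i) + (∑ j, pi (p j) * (y j : ℝ)) := by
  let eα := (Fintype.equivFin α).symm
  let eβ := (Fintype.equivFin β).symm
  have hvalid := h _ _ (r ∘ eα) (p ∘ eβ) (fun _ => trivial) (fun _ => trivial) (s ∘ eα) (y ∘ eβ)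
    fun _ => hs _
  simp only [Function.comp_apply, eα.sum_comp (fun i => s i • r i),
    eβ.sum_comp (fun j => (y j : ℝ) • p j), eα.sum_comp (fun i => psi (r i) * s i),
    eβ.sum_comp (fun j => pi (p j) * (y j : ℝ))] at hvalid
  exact hvalid hmem

theorem IsLifting.min_translate (h : IsLifting S psi pi) {u : E} (hu : u ∈ Wplus S) (m : ℕ)
    (x : E) : IsLifting S psi (fun q => min (pi q) (psi (q + u - (m : ℝ) • x) + m * pi x)) := by
  classical
  intro k l r p _ _ s y hs hmem
  set g : E → ℝ := fun q => psi (q + u - (m : ℝ) • x) + m * pi x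
  let c : Fin l → ℕ := fun j => if g (p j) ≤ pi (p j) then y j else 0
  let d : Fin l → ℕ := fun j => if g (p j) ≤ pi (p j) then 0 else y j
  have hcd : ∀ j, (c j : ℝ) + d j = y j := fun j => by
    simp only [c, d]; split_ifs <;> simp
  have hvalid := h.one_le (Sum.elim r fun j => p j + u - (m : ℝ) • x)
    (Sum.elim s fun j => (c j : ℝ)) (Sum.elim p fun _ : Unit => x)
    (Sum.elim d fun _ => m * ∑ j, c j) (fun i => by cases i <;> simp [hs])
  simp only [Fintype.sum_sum_type, Sum.elim_inl, Sum.elim_inr, Fintype.sum_unique] at hvalid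
  have hy : ∀ j, (y j : ℝ) • p j + (c j : ℝ) • u
      = (c j : ℝ) • (p j + u - (m : ℝ) • x) + (d j : ℝ) • p j + ((m : ℝ) * c j) • x := fun j => by
    rw [← hcd j]; module
  have hval : ∀ j, min (pi (p j)) (psi (p j + u - (m : ℝ) • x) + m * pi x) * y j
      = psi (p j + u - (m : ℝ) • x) * c j + pi (p j) * d j + pi x * ((m : ℝ) * c j) := fun j => by
    simp only [c, d]
    split_ifs with hj
    · rw [min_eq_right hj]; push_cast; ring
    · rw [min_eq_left (le_of_not_ge hj)]; push_cast; ring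
  have hshift := hu _ hmem (∑ j, c j)
  simp only [Nat.cast_sum, Finset.sum_smul, add_assoc, ← Finset.sum_add_distrib, hy] at hshift
  simp only [Finset.sum_add_distrib, ← Finset.sum_smul, ← Finset.mul_sum] at hshift
  push_cast at hvalid
  simp only [hval, Finset.sum_add_distrib, ← Finset.mul_sum]
  convert hvalid (by convert hshift using 1; abel) using 1
  ring

end Lifting

section MinimalLifting

variable {E : Type*} [AddCommGroup E] [Module ℝ E] {S : Set E} {psi pi : E → ℝ} {u : E}

theorem IsMinimalLifting.le_translate (h : IsMinimalLifting S psi pi) (hu : u ∈ Wplus S)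
    (m : ℕ) (x q : E) : pi q ≤ psi (q + u - (m : ℝ) • x) + m * pi x :=
  min_eq_left_iff.mp (congrFun (h.2 _ (h.1.min_translate hu m x) fun _ => min_le_left _ _) q)

theorem IsMinimalLifting.le_add (h : IsMinimalLifting S psi pi) (hpsi : psi 0 = 0)
    (hu : u ∈ Wplus S) (q : E) : pi q ≤ pi (q + u) := by
  simpa [hpsi] using h.le_translate hu 1 (q + u) q

theorem Wint_subset_Wplus : Wint S ⊆ Wplus S := fun _ hu s hs lam => by
  simpa using hu s hs lam

theorem neg_mem_Wint (hu : u ∈ Wint S) : -u ∈ Wint S := fun s hs lam => by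
  simpa using hu s hs (-lam)

theorem IsMinimalLifting.apply_add_of_mem_Wint (h : IsMinimalLifting S psi pi)
    (hpsi : psi 0 = 0) (hu : u ∈ Wint S) (q : E) : pi (q + u) = pi q :=
  le_antisymm (by simpa using h.le_add hpsi (Wint_subset_Wplus (neg_mem_Wint hu)) (q + u))
    (h.le_add hpsi (Wint_subset_Wplus hu) q)

theorem fst_mem_Wplus_of_mem_Wplus_prod {F : Type*} [AddCommGroup F] [Module ℝ F] {T : Set F}
    {v : E × F} (hv : v ∈ Wplus (S ×ˢ T)) (hT : (0 : F) ∈ T) : v.1 ∈ Wplus S :=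
  fun s hs lam => by simpa using (hv (s, 0) ⟨hs, hT⟩ lam).1

theorem snd_mem_Znn_of_mem_Wplus_prod {v : E × ℝ} (hv : v ∈ Wplus (S ×ˢ Znn)) {s : E}
    (hs : s ∈ S) : v.2 ∈ Znn := by
  simpa using (hv (s, 0) ⟨hs, 0, by simp⟩ 1).2

theorem zero_nat_mem_Wplus_prod_Znn (j : ℕ) : ((0 : E), (j : ℝ)) ∈ Wplus (S ×ˢ Znn) := by
  rintro ⟨s, t⟩ ⟨hs, l, rfl⟩ lam
  exact ⟨by simpa using hs, l + lam * j, by simp⟩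

end MinimalLifting

section PsiMax

variable {n : ℕ} {ι : Type} [Fintype ι] [Nonempty ι] (a : ι → Fin n → ℝ)

theorem dotp_eq_dotProduct (x y : Fin n → ℝ) : dotp x y = x ⬝ᵥ y := rfl

theorem psiMax_zero : psiMax a 0 = 0 := by
  simp [psiMax, dotp_eq_dotProduct]

theorem psiMax_eq_of_forall_le {r : Fin n → ℝ} {k : ι}
    (h : ∀ i, dotp (a i) r ≤ dotp (a k) r) : psiMax a r = dotp (a k) r :=
  le_antisymm (ciSup_le h) (le_ciSup (f := fun i => dotp (a i) r) (Set.finite_range _).bddAbove k)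

theorem psiB_eq (lam : ℝ) (p q : Fin n → ℝ) (t : ℝ) :
    psiB a lam p (q, t) = psiMax a (q - t • p) + lam * t := by
  simp only [psiB, psiMax, dotp_eq_dotProduct, dotProduct_sub, dotProduct_smul, smul_eq_mul]
  have h := (OrderIso.addRight (lam * t)).map_ciSup
    (f := fun i => a i ⬝ᵥ q - t * a i ⬝ᵥ p) (Set.finite_range _).bddAbove
  simp only [OrderIso.addRight_apply] at h
  rw [h]
  congr 1 with i
  ring

theorem psiMax_sub_of_mem_spindleK {k : ι} {w r : Fin n → ℝ}
    (hk : ∀ i, dotp (a i) w ≤ dotp (a k) w) (hr : r ∈ spindleK a k w) :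
    psiMax a (w - r) = psiMax a w - psiMax a r := by
  simp only [spindleK, dotp_eq_dotProduct, sub_dotProduct,
    tsub_le_iff_right, zero_add] at hr
  rw [psiMax_eq_of_forall_le a hk, psiMax_eq_of_forall_le a fun i => (hr i).1,
    psiMax_eq_of_forall_le a fun i => (hr i).2, dotp_eq_dotProduct, dotp_eq_dotProduct,
    dotp_eq_dotProduct, dotProduct_sub]

end PsiMax

section SpindleValues

variable {n : ℕ} {ι : Type} [Fintype ι] [Nonempty ι] {a : ι → Fin n → ℝ}
  {S : Set (Fin n → ℝ)} {pstar w : Fin n → ℝ} {N : ℕ} {pi : (Fin n → ℝ) → ℝ}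

theorem LiftSet.apply_add_smul_of_mem_spindleK (hwN : AttainsSup S (psiMax a) pstar w N)
    {k : ι} (hk : ∀ i, dotp (a i) w ≤ dotp (a k) w) (hpi : pi ∈ LiftSet S (psiMax a) pstar)
    {j : ℕ} (hj : j ≤ N) {r : Fin n → ℝ} (hr : r ∈ spindleK a k w) :
    pi (r + (j : ℝ) • pstar) = psiMax a r + j * Vpsi S (psiMax a) pstar := by
  obtain ⟨hmin, hpstar⟩ := hpi
  obtain ⟨hN, hwS, hV, -⟩ := hwN
  have hNV : 1 - psiMax a w = N * Vpsi S (psiMax a) pstar := by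
    rw [← hV, mul_div_cancel₀ _ (by positivity)]
  apply le_antisymm
  · simpa [hpstar] using hmin.le_translate (u := 0) (fun s hs _ => by simpa using hs) j pstar
      (r + (j : ℝ) • pstar)
  · have hsplit : (∑ _ : Unit, (1 : ℝ) • (w - r)) +
        ∑ t : Fin 2, ((![1, N - j] t : ℕ) : ℝ) • ![r + (j : ℝ) • pstar, pstar] t
        = w + (N : ℝ) • pstar := by
      simp only [Fintype.sum_unique, Fin.sum_univ_two, Matrix.cons_val_zero, Matrix.cons_val_one,
        Nat.cast_one, Nat.cast_sub hj]
      module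
    have h := hmin.1.one_le _ _ _ _ (fun _ => zero_le_one) (hsplit ▸ hwS)
    simp only [Fintype.sum_unique, Fin.sum_univ_two, Matrix.cons_val_zero, Matrix.cons_val_one,
      Nat.cast_one, Nat.cast_sub hj, mul_one, hpstar, psiMax_sub_of_mem_spindleK a hk hr] at h
    linarith

theorem LiftSet.coe_le_psiStarB (hS : S.Nonempty) (hpi : pi ∈ LiftSet S (psiMax a) pstar)
    (q : Fin n → ℝ) :
    ((pi q : ℝ) : EReal) ≤ psiStarB S a (Vpsi S (psiMax a) pstar) pstar (q, 0) := by
  refine le_sInf ?_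
  rintro _ ⟨v, hv, rfl⟩
  obtain ⟨m, hm⟩ := snd_mem_Znn_of_mem_Wplus_prod hv hS.some_mem
  rw [EReal.coe_le_coe_iff, Prod.mk_add_mk, zero_add, hm, psiB_eq, ← hpi.2]
  linarith [hpi.1.le_translate (fst_mem_Wplus_of_mem_Wplus_prod hv ⟨0, by simp⟩) m pstar q]

theorem psiStarB_le_psiB (lam : ℝ) (p q : Fin n → ℝ) (j : ℕ) :
    psiStarB S a lam p (q, 0) ≤ psiB a lam p (q, j) :=
  sInf_le ⟨(0, j), zero_nat_mem_Wplus_prod_Znn j, by simp⟩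

end SpindleValues

theorem stmt11_general {n : ℕ} (S : Set (Fin n → ℝ))
    {ι : Type} [Fintype ι] [Nonempty ι] (a : ι → Fin n → ℝ)
    (pstar : Fin n → ℝ) (w : Fin n → ℝ) (N : ℕ)
    (hwN : AttainsSup S (psiMax a) pstar w N)
    (k : ι) (hk : ∀ i, dotp (a i) w ≤ dotp (a k) w) :
    ((⋃ j ∈ Finset.range (N + 1), (fun r => r + (j : ℝ) • pstar) '' spindleK a k w) +
        Wint S ⊆ FixingRegion S (psiMax a) pstar) ∧
      ∀ pi ∈ LiftSet S (psiMax a) pstar,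
        ∀ p ∈ ⋃ j ∈ Finset.range (N + 1), (fun r => r + (j : ℝ) • pstar) '' spindleK a k w,
          ∀ u ∈ Wint S,
            pi (p + u) = pi p ∧
              ((pi p : ℝ) : EReal) =
                psiStarB S a (Vpsi S (psiMax a) pstar) pstar ((p, (0 : ℝ))) := by
  have hvalue : ∀ pi ∈ LiftSet S (psiMax a) pstar, ∀ j < N + 1, ∀ r ∈ spindleK a k w,
      pi (r + (j : ℝ) • pstar) = psiMax a r + j * Vpsi S (psiMax a) pstar :=
    fun _ hpi _ hj _ hr =>
      LiftSet.apply_add_smul_of_mem_spindleK hwN hk hpi (Nat.lt_succ_iff.mp hj) hr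
  have hperiodic : ∀ pi ∈ LiftSet S (psiMax a) pstar, ∀ {u}, u ∈ Wint S → ∀ q,
      pi (q + u) = pi q :=
    fun _ hpi _ hu => hpi.1.apply_add_of_mem_Wint (psiMax_zero a) hu
  constructor
  · rintro _ ⟨_, hp, u, hu, rfl⟩ pi₁ h₁ pi₂ h₂
    simp only [Set.mem_iUnion, Set.mem_image, Finset.mem_range] at hp
    obtain ⟨j, hj, r, hr, rfl⟩ := hp
    rw [hperiodic pi₁ h₁ hu, hperiodic pi₂ h₂ hu, hvalue pi₁ h₁ j hj r hr, hvalue pi₂ h₂ j hj r hr]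
  · intro pi hpi p hp u hu
    simp only [Set.mem_iUnion, Set.mem_image, Finset.mem_range] at hp
    obtain ⟨j, hj, r, hr, rfl⟩ := hp
    refine ⟨hperiodic pi hpi hu _, le_antisymm (LiftSet.coe_le_psiStarB ⟨_, hwN.2.1⟩ hpi _) ?_⟩
    refine (psiStarB_le_psiB _ _ _ j).trans_eq ?_
    rw [psiB_eq, add_sub_cancel_right, hvalue pi hpi j hj r hr, mul_comm]

/-- Theorem 4.10: inner approximation of the fixing region, together with the
value taken there by every `π ∈ 𝓛_{ψ,p*}`. -/
theorem stmt11 {n : ℕ} (hn : 1 ≤ n) (b : Fin n → ℝ) (hb : b ∉ Zpts n)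
    (Q : Set (Fin n → ℝ)) (hQ : IsRatPolyhedron Q) (S : Set (Fin n → ℝ))
    (hS : S = {x | x - b ∈ Zpts n} ∩ Q)
    {ι : Type} [Fintype ι] [Nonempty ι] (a : ι → Fin n → ℝ) (B : Set (Fin n → ℝ))
    (hB : B = {r | ∀ i, dotp (a i) r ≤ 1}) (hmax : IsMaxFreeNbhd S B)
    (pstar : Fin n → ℝ) (w : Fin n → ℝ) (N : ℕ)
    (hwN : AttainsSup S (psiMax a) pstar w N)
    (k : ι) (hk : ∀ i, dotp (a i) w ≤ dotp (a k) w) :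
    ((⋃ j ∈ Finset.range (N + 1), (fun r => r + (j : ℝ) • pstar) '' spindleK a k w) +
        Wint S ⊆ FixingRegion S (psiMax a) pstar) ∧
      ∀ pi ∈ LiftSet S (psiMax a) pstar,
        ∀ p ∈ ⋃ j ∈ Finset.range (N + 1), (fun r => r + (j : ℝ) • pstar) '' spindleK a k w,
          ∀ u ∈ Wint S,
            pi (p + u) = pi p ∧
              ((pi p : ℝ) : EReal) =
                psiStarB S a (Vpsi S (psiMax a) pstar) pstar ((p, (0 : ℝ))) :=
  stmt11_general S a pstar w N hwN k hk
end
end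

section
/- Let S = (b + ℤⁿ) ∩ Q be a polyhedrally-truncated affine lattice, B = {r : aⁱ·r ≤ 1, i ∈ I} a maximal S-free convex 0-neighborhood with ψ(r) = max_{i∈I} aⁱ·r, and p* ∈ ℝⁿ. For any (x̄, x̄_{n+1}) ∈ (S × ℤ₊) ∩ B(V_ψ(p*), p*), setting (w, N) := (x̄ − x̄_{n+1}p*, x̄_{n+1}), one has (R_B(w) ∪ (R_B(w) + p*) ∪ ⋯ ∪ (R_B(w) + Np*)) + W_S ⊆ 𝓕_{ψ,p*}. -/
open scoped BigOperators
open Pointwise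

noncomputable section

section Aux
variable {E : Type*} [AddCommGroup E] [Module ℝ E] {S : Set E} {psi pi : E → ℝ}

lemma pair_lb (h : IsLifting S psi pi) {s : E} (hs : s ∈ S) (q : E) :
    1 ≤ pi q + pi (s - q) := by
  have := h 0 2 (fun i => i.elim0) ![q, s - q] (fun i => i.elim0) (fun _ => trivial)
    (fun i => i.elim0) ![1, 1] (fun i => i.elim0) ?_
  · simpa [Fin.sum_univ_two] using this
  · simpa [Fin.sum_univ_two] using hs

lemma lifting_min_affine (h : IsLifting S psi pi) (p : E) (m : ℕ) :
    IsLifting S psi (fun x => min (pi x) (psi (x - (m : ℝ) • p) + (m : ℝ) * pi p)) := by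
  classical
  intro k l r pf _ _ s y hs hmem
  set c : Fin l → Prop := fun j => pi (pf j) ≤ psi (pf j - (m : ℝ) • p) + (m : ℝ) * pi p with hc
  have key := h (k + l) (l + 1)
      (Fin.append r (fun j => pf j - (m : ℝ) • p))
      (Fin.append pf (fun _ : Fin 1 => p))
      (fun _ => trivial) (fun _ => trivial)
      (Fin.append s (fun j => if c j then 0 else (y j : ℝ)))
      (Fin.append (fun j => if c j then y j else 0)
        (fun _ => ∑ j, (if c j then 0 else y j * m)))
      ?_ ?_
  · calc (1:ℝ) ≤ _ := key
      _ = (∑ i, psi (r i) * s i) +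
          ∑ j, (fun x => min (pi x) (psi (x - (m : ℝ) • p) + (m : ℝ) * pi p)) (pf j) * (y j : ℝ) := by
        rw [Fin.sum_univ_add, Fin.sum_univ_add, Fin.sum_univ_one]
        simp only [Fin.append_left, Fin.append_right]
        push_cast
        rw [Finset.mul_sum, add_assoc, ← Finset.sum_add_distrib, ← Finset.sum_add_distrib]
        congr 1
        refine Finset.sum_congr rfl fun j _ => ?_
        by_cases hj : c j
        · simp [hj, min_eq_left hj]
        · simp [hj, min_eq_right (le_of_not_ge hj)]; ring
  · intro i
    refine Fin.addCases (fun i => ?_) (fun i => ?_) i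
    · simpa [Fin.append_left] using hs i
    · simp only [Fin.append_right]
      split <;> positivity
  · have e : ((∑ i, Fin.append s (fun j => if c j then 0 else (y j : ℝ)) i •
        Fin.append r (fun j => pf j - (m : ℝ) • p) i) +
        ∑ j, ((Fin.append (fun j => if c j then y j else 0)
          (fun _ => ∑ j, (if c j then 0 else y j * m)) j : ℕ) : ℝ) •
          Fin.append pf (fun _ : Fin 1 => p) j)
        = (∑ i, s i • r i) + ∑ j, (y j : ℝ) • pf j := by
      rw [Fin.sum_univ_add, Fin.sum_univ_add, Fin.sum_univ_one]
      simp only [Fin.append_left, Fin.append_right]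
      push_cast
      rw [Finset.sum_smul, ← Finset.sum_add_distrib, add_assoc, ← Finset.sum_add_distrib]
      congr 1
      refine Finset.sum_congr rfl fun j _ => ?_
      by_cases hj : c j
      · simp [hj]
      · simp [hj]
        try module
    rw [e]; exact hmem

lemma minimal_affine_bound (h : IsMinimalLifting S psi pi) (x p : E) (m : ℕ) :
    pi x ≤ psi (x - (m : ℝ) • p) + (m : ℝ) * pi p := by
  have he := h.2 _ (lifting_min_affine h.1 p m) (fun x => min_le_left _ _)
  have := congrFun he x
  simpa using min_eq_left_iff.mp this

lemma lifting_min_transl (h : IsLifting S psi pi) {w : E} (hw : w ∈ Wint S) :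
    IsLifting S psi (fun x => min (pi x) (pi (x + w))) := by
  classical
  intro k l r pf _ _ s y hs hmem
  set c : Fin l → Prop := fun j => pi (pf j) ≤ pi (pf j + w) with hc
  have key := h k l r (fun j => if c j then pf j else pf j + w)
      (fun _ => trivial) (fun _ => trivial) s y hs ?_
  · calc (1:ℝ) ≤ _ := key
      _ = _ := by
        congr 1
        refine Finset.sum_congr rfl fun j _ => ?_
        by_cases hj : c j
        · simp only [if_pos hj, min_eq_left hj]
        · simp only [if_neg hj, min_eq_right (le_of_not_ge hj)]
  · have e : (∑ j, (y j : ℝ) • (if c j then pf j else pf j + w))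
        = (∑ j, (y j : ℝ) • pf j) + ((∑ j, if c j then 0 else y j : ℕ) : ℝ) • w := by
      push_cast
      rw [Finset.sum_smul, ← Finset.sum_add_distrib]
      refine Finset.sum_congr rfl fun j _ => ?_
      by_cases hj : c j
      · simp [hj]
      · simp [hj]
        try module
    rw [e, ← add_assoc]
    have := hw _ hmem ((∑ j, if c j then 0 else y j : ℕ) : ℤ)
    simpa using this

lemma wint_neg {w : E} (hw : w ∈ Wint S) : -w ∈ Wint S := by
  intro s hs lam
  have := hw s hs (-lam)
  simpa [neg_smul, smul_neg] using this

lemma minimal_transl (h : IsMinimalLifting S psi pi) {w : E} (hw : w ∈ Wint S) (x : E) :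
    pi (x + w) = pi x := by
  have key : ∀ w' ∈ Wint S, ∀ z : E, pi z ≤ pi (z + w') := by
    intro w' hw' z
    have he := h.2 _ (lifting_min_transl h.1 hw') (fun x => min_le_left _ _)
    have := congrFun he z
    simpa using min_eq_left_iff.mp this
  have h1 := key w hw x
  have h2 := key (-w) (wint_neg hw) (x + w)
  simp only [add_neg_cancel_right] at h2
  exact le_antisymm h2 h1

end Aux

lemma psiMax_eq_of_max {n : ℕ} {ι : Type} [Fintype ι] [Nonempty ι] (a : ι → Fin n → ℝ)
    (k : ι) (r : Fin n → ℝ) (h : ∀ i, dotp (a i) r ≤ dotp (a k) r) :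
    psiMax a r = dotp (a k) r := by
  have h2 : dotp (a k) r ≤ ⨆ i, dotp (a i) r :=
    le_ciSup (Set.Finite.bddAbove (Set.finite_range fun i => dotp (a i) r)) k
  exact le_antisymm (ciSup_le h) h2

lemma dotp_sub_right {n : ℕ} (a x y : Fin n → ℝ) : dotp a (x - y) = dotp a x - dotp a y := by
  simp [dotp, mul_sub, Finset.sum_sub_distrib]

lemma dotp_sub_left {n : ℕ} (a b x : Fin n → ℝ) : dotp (a - b) x = dotp a x - dotp b x := by
  simp [dotp, sub_mul, Finset.sum_sub_distrib]

lemma dotp_smul_right {n : ℕ} (a : Fin n → ℝ) (c : ℝ) (x : Fin n → ℝ) :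
    dotp a (c • x) = c * dotp a x := by
  simp [dotp, Finset.mul_sum, mul_left_comm]


/-- Corollary 4.11: for any `(x̄, x̄_{n+1}) ∈ (S × ℤ₊) ∩ B(V_ψ(p*),p*)`, setting
`(w, N) = (x̄ − x̄_{n+1} p*, x̄_{n+1})`, the union of translated spindles plus `W_S`
is contained in the fixing region. -/
theorem stmt12 {n : ℕ} (hn : 1 ≤ n) (b : Fin n → ℝ) (hb : b ∉ Zpts n)
    (Q : Set (Fin n → ℝ)) (hQ : IsRatPolyhedron Q) (S : Set (Fin n → ℝ))
    (hS : S = {x | x - b ∈ Zpts n} ∩ Q)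
    {ι : Type} [Fintype ι] [Nonempty ι] (a : ι → Fin n → ℝ) (B : Set (Fin n → ℝ))
    (hB : B = {r | ∀ i, dotp (a i) r ≤ 1}) (hmax : IsMaxFreeNbhd S B)
    (pstar : Fin n → ℝ)
    (xb : Fin n → ℝ) (N : ℕ) (hxbS : xb ∈ S)
    (hmem : ((xb, (N : ℝ)) : (Fin n → ℝ) × ℝ) ∈ Bcone a (Vpsi S (psiMax a) pstar) pstar)
    (k : ι)
    (hk : ∀ i, dotp (a i) (xb - (N : ℝ) • pstar) ≤ dotp (a k) (xb - (N : ℝ) • pstar)) :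
    (⋃ j ∈ Finset.range (N + 1),
        (fun r => r + (j : ℝ) • pstar) '' spindleK a k (xb - (N : ℝ) • pstar)) +
      Wint S ⊆ FixingRegion S (psiMax a) pstar := by
  set V : ℝ := Vpsi S (psiMax a) pstar with hV
  intro q hq
  rw [Set.mem_add] at hq
  obtain ⟨u, hu, w, hw, huw⟩ := hq
  simp only [Set.mem_iUnion, Finset.mem_range] at hu
  obtain ⟨j, hjN, r, hr, hru⟩ := hu
  have hjN' : j ≤ N := Nat.lt_succ_iff.mp hjN
  -- the value is fixed
  have key : ∀ pi ∈ LiftSet S (psiMax a) pstar, pi q = dotp (a k) r + (j : ℝ) * V := by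
    intro pi hpi
    obtain ⟨hmin, hpV⟩ := hpi
    have hq1 : q = u + w := huw.symm
    have hqu : pi q = pi u := by rw [hq1]; exact minimal_transl hmin hw u
    have hur : u = r + (j : ℝ) • pstar := hru.symm
    -- psi values on the spindle
    have hps1 : psiMax a r = dotp (a k) r := by
      refine psiMax_eq_of_max a k r fun i => ?_
      have := (hr i).1
      rw [dotp_sub_left] at this; linarith
    have hps2 : psiMax a ((xb - (N : ℝ) • pstar) - r) = dotp (a k) ((xb - (N : ℝ) • pstar) - r) := by
      refine psiMax_eq_of_max a k _ fun i => ?_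
      have := (hr i).2
      rw [dotp_sub_left] at this; linarith
    -- upper bound
    have hub : pi u ≤ dotp (a k) r + (j : ℝ) * V := by
      have := minimal_affine_bound hmin u pstar j
      rw [hur] at this ⊢
      simpa [hps1, hpV] using this
    -- lower bound
    have hlb : 1 ≤ pi u + pi (xb - u) := pair_lb hmin.1 hxbS u
    have hub2 : pi (xb - u) ≤ dotp (a k) ((xb - (N : ℝ) • pstar) - r) + ((N : ℝ) - (j : ℝ)) * V := by
      have hb := minimal_affine_bound hmin (xb - u) pstar (N - j)
      have hcast : (((N - j : ℕ) : ℝ)) = (N : ℝ) - (j : ℝ) := by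
        push_cast [hjN']; ring
      rw [hcast] at hb
      have harg : (xb - u) - ((N : ℝ) - (j : ℝ)) • pstar = (xb - (N : ℝ) • pstar) - r := by
        rw [hur]; module
      rw [harg, hps2, hpV] at hb
      exact hb
    -- the cone inequality at k
    have hck := hmem k
    simp only [Bcone, Set.mem_setOf_eq] at hck
    have hdk : dotp (a k) (xb - (N : ℝ) • pstar) = dotp (a k) xb - (N : ℝ) * dotp (a k) pstar := by
      rw [dotp_sub_right, dotp_smul_right]
    have hdk2 : dotp (a k) ((xb - (N : ℝ) • pstar) - r)
        = dotp (a k) (xb - (N : ℝ) • pstar) - dotp (a k) r := dotp_sub_right _ _ _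
    rw [hqu]
    have : dotp (a k) xb + (V - dotp (a k) pstar) * (N : ℝ) ≤ 1 := hck
    nlinarith [hlb, hub, hub2]
  intro pi1 h1 pi2 h2
  rw [key pi1 h1, key pi2 h2]
end
end

section
/- Let T = T(γ₁, γ₂, γ₃) be a Type 3 triangle (with γ₁, γ₂, γ₃ > 0 and γ₂, γ₃ < 1) for S = b + ℤ². Then there exists a polyhedron P ⊆ ℝ³ such that: (i) P is a translated cone with three facets whose apex a = (a₁, a₂, a₃) satisfies a₃ > 0; (ii) P ∩ {x ∈ ℝ³ : x₃ = 0} = T × {0}; (iii) P is a maximal (S × ℤ₊)-free convex set; and (iv) each facet of P contains in its relative interior a point (sᵢ, zᵢ) ∈ S × ℤ₊ with zᵢ ≥ 1 (i = 1, 2, 3). -/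
/-!
In coordinates `y = x - (b₁, b₂, 0)` the cone is cut out by the three halfspaces
`(m+1) y₁ + (m+1) γ₁ y₂ + (m+1+mγ₁) y₃ ≤ (m+1)(1+γ₁)`, `-y₁ + γ₂ y₂ - (1-γ₂) y₃ ≤ γ₂` and
`γ₃ y₁ - y₂ ≤ 0`, whose traces on `y₃ = 0` are the edges of `T`, and `S × ℤ₊` becomes `ℤ² × ℤ₊`.
The integer `m` is chosen with `γ₃ ≤ m(1-γ₃) < 1`. The lower bound makes the cone lattice-free: a
case split on the sign of `z + k` shows that no `(z, w, k) ∈ ℤ² × ℤ₊` satisfies all three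
inequalities strictly. The upper bound makes each of the lattice points `(-m, 1-m, m+1)`,
`(-1, 0, 1)`, `(0, 0, 1)` lie on one facet and strictly inside the other two halfspaces. Such a
point is in the relative interior of its facet, and a convex set reaching beyond that facet has it
between a point of the open cone and a point of its own, hence in its interior: this gives
maximality.
-/

open scoped BigOperators

noncomputable section

def dot2 (u v : ℝ × ℝ) : ℝ := u.1 * v.1 + u.2 * v.2

def dot3 (u v : ℝ × ℝ × ℝ) : ℝ := u.1 * v.1 + u.2.1 * v.2.1 + u.2.2 * v.2.2

/-- `S × ℤ₊ ⊆ ℝ³`. -/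
def SZ3 (S : Set (ℝ × ℝ)) : Set (ℝ × ℝ × ℝ) :=
  {x | ((x.1, x.2.1) : ℝ × ℝ) ∈ S ∧ ∃ k : ℕ, x.2.2 = (k : ℝ)}

open Filter Topology

section Polyhedron

variable {E ι : Type*} [AddCommGroup E] [Module ℝ E] [TopologicalSpace E] (f : ι → E →L[ℝ] ℝ)

lemma isOpen_setOf_forall_lt_one [Finite ι] : IsOpen {x | ∀ i, f i x < 1} := by
  simp only [Set.ofPred_forall]
  exact isOpen_iInter_of_finite fun i => isOpen_lt (f i).continuous continuous_const

lemma convex_setOf_forall_le_one : Convex ℝ {x | ∀ i, f i x ≤ 1} := by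
  simp only [Set.ofPred_forall]
  exact convex_iInter fun i => convex_halfSpace_le (f i).isLinear 1

lemma interior_setOf_forall_le_one [ContinuousAdd E] [ContinuousSMul ℝ E] [Finite ι]
    (hf : ∀ i, f i ≠ 0) : interior {x | ∀ i, f i x ≤ 1} = {x | ∀ i, f i x < 1} := by
  have h (i : ι) : interior (f i ⁻¹' Set.Iic 1) = f i ⁻¹' Set.Iio 1 := by
    rw [← ((f i).isOpenMap_of_ne_zero (hf i)).preimage_interior_eq_interior_preimage
      (f i).continuous, interior_Iic]
  simp only [Set.ofPred_forall]
  exact (interior_iInter_of_finite _).trans (Set.iInter_congr h)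

lemma mem_intrinsicInterior_facet [Finite ι] {i : ι} {Q : E} (hQi : f i Q = 1)
    (hQ : ∀ j ≠ i, f j Q < 1) :
    Q ∈ intrinsicInterior ℝ ({x | ∀ j, f j x ≤ 1} ∩ {x | f i x = 1}) := by
  set F := {x | ∀ j, f j x ≤ 1} ∩ {x | f i x = 1}
  have mem_F {x : E} (hx : f i x = 1) (h : ∀ j ≠ i, f j x ≤ 1) : x ∈ F :=
    ⟨fun j => (eq_or_ne j i).elim (fun hj => hj ▸ hx.le) (h j), hx⟩
  have hspan : affineSpan ℝ F ≤ (affineSpan ℝ {(1 : ℝ)}).comap (f i : E →ₗ[ℝ] ℝ).toAffineMap :=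
    affineSpan_le.2 fun x hx => by simpa using hx.2
  refine mem_intrinsicInterior.2
    ⟨⟨Q, subset_affineSpan ℝ F (mem_F hQi fun j hj => (hQ j hj).le)⟩, ?_, rfl⟩
  refine interior_maximal ?_
    ((isOpen_setOf_forall_lt_one fun j : {j // j ≠ i} => f j).preimage continuous_subtype_val)
    fun j => hQ j j.2
  rintro ⟨x, hx⟩ hxU
  exact mem_F (by simpa using hspan hx) fun j hj => (hxU ⟨j, hj⟩).le

lemma subset_setOf_forall_le_one_of_facet_points [IsTopologicalAddGroup E] [ContinuousSMul ℝ E]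
    [Finite ι] {X B : Set E} (hB : Convex ℝ B) (hBX : interior B ∩ X = ∅)
    (hPB : {x | ∀ i, f i x ≤ 1} ⊆ B) (Q : ι → E) (hQX : ∀ i, Q i ∈ X)
    (hQi : ∀ i, f i (Q i) = 1) (hQ : ∀ i, ∀ j ≠ i, f j (Q i) < 1) :
    B ⊆ {x | ∀ i, f i x ≤ 1} := by
  intro y hy i
  by_contra! hyi
  -- Just beyond `Q i` on the ray from `y`, the points `c ε` lie in the open polyhedron.
  set c : ℝ → E := fun ε => Q i + ε • (Q i - y)
  have hc : ∀ᶠ ε in 𝓝[>] 0, ∀ j : {j // j ≠ i}, f j (c ε) < 1 :=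
    ((by fun_prop : Continuous c).tendsto' 0 (Q i) (by simp [c])).eventually_mem
      ((isOpen_setOf_forall_lt_one fun j : {j // j ≠ i} => f j).mem_nhds fun j => hQ i j j.2)
      |>.filter_mono nhdsWithin_le_nhds
  obtain ⟨ε, hcε, hε : 0 < ε⟩ := (hc.and self_mem_nhdsWithin).exists
  have hcB : c ε ∈ interior B := by
    refine interior_maximal (fun x hx => hPB fun j => (hx j).le) (isOpen_setOf_forall_lt_one f)
      fun j => ?_
    rcases eq_or_ne j i with rfl | hj
    · simp only [c, map_add, map_smul, map_sub, hQi, smul_eq_mul]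
      nlinarith
    · exact hcε ⟨j, hj⟩
  have hseg : Q i ∈ openSegment ℝ (c ε) y := by
    refine ⟨(1 + ε)⁻¹, ε / (1 + ε), by positivity, by positivity, by field_simp, ?_⟩
    simp only [c, smul_add, smul_sub, smul_smul]
    match_scalars
    · field_simp
    · field_simp
      ring
  exact hBX.subset
    ⟨hB.openSegment_interior_closure_subset_interior hcB (subset_closure hy) hseg, hQX i⟩

lemma isMaxFreeNbhd_of_facet_points [IsTopologicalAddGroup E] [ContinuousSMul ℝ E] [Finite ι]
    {X : Set E} (hfree : interior {x | ∀ i, f i x ≤ 1} ∩ X = ∅) (Q : ι → E)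
    (hQX : ∀ i, Q i ∈ X) (hQi : ∀ i, f i (Q i) = 1) (hQ : ∀ i, ∀ j ≠ i, f j (Q i) < 1) :
    IsMaxFreeNbhd X {x | ∀ i, f i x ≤ 1} := by
  refine ⟨convex_setOf_forall_le_one f, ?_, hfree, fun B hB _ hBX hPB =>
    (subset_setOf_forall_le_one_of_facet_points f hB hBX hPB Q hQX hQi hQ).antisymm hPB⟩
  refine interior_maximal (fun x hx i => (hx i).le) (isOpen_setOf_forall_lt_one f) fun i => ?_
  simp

end Polyhedron

section Dot3

def dot3CLM (u : ℝ × ℝ × ℝ) : (ℝ × ℝ × ℝ) →L[ℝ] ℝ :=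
  u.1 • ContinuousLinearMap.fst ℝ ℝ (ℝ × ℝ) +
    u.2.1 • (ContinuousLinearMap.fst ℝ ℝ ℝ).comp (ContinuousLinearMap.snd ℝ ℝ (ℝ × ℝ)) +
    u.2.2 • (ContinuousLinearMap.snd ℝ ℝ ℝ).comp (ContinuousLinearMap.snd ℝ ℝ (ℝ × ℝ))

@[simp]
lemma dot3CLM_apply (u x : ℝ × ℝ × ℝ) : dot3CLM u x = dot3 u x := rfl

lemma dot3CLM_ne_zero {u : ℝ × ℝ × ℝ} (hu : u ≠ 0) : dot3CLM u ≠ 0 := by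
  obtain ⟨a, c, d⟩ := u
  intro h
  have h0 : a * a + c * c + d * d = 0 := by simpa [dot3] using DFunLike.congr_fun h (a, c, d)
  refine hu (Prod.mk_eq_zero.2 ⟨?_, Prod.mk_eq_zero.2 ⟨?_, ?_⟩⟩) <;>
    nlinarith [mul_self_nonneg a, mul_self_nonneg c, mul_self_nonneg d]

lemma dot3_smul_left (c : ℝ) (u x : ℝ × ℝ × ℝ) : dot3 (c • u) x = c * dot3 u x := by
  simp only [dot3, Prod.smul_fst, Prod.smul_snd, smul_eq_mul]
  ring

lemma dot3_sub_right (u x y : ℝ × ℝ × ℝ) : dot3 u (x - y) = dot3 u x - dot3 u y := by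
  simp only [dot3, Prod.fst_sub, Prod.snd_sub]
  ring

lemma setOf_dot3_le_one_inter_eq_image (u₁ u₂ u₃ : ℝ × ℝ × ℝ) :
    {x | dot3 u₁ x ≤ 1 ∧ dot3 u₂ x ≤ 1 ∧ dot3 u₃ x ≤ 1} ∩ {x : ℝ × ℝ × ℝ | x.2.2 = 0} =
      (fun v : ℝ × ℝ => ((v.1, v.2, (0 : ℝ)) : ℝ × ℝ × ℝ)) ''
        {v | dot2 (u₁.1, u₁.2.1) v ≤ 1 ∧ dot2 (u₂.1, u₂.2.1) v ≤ 1 ∧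
          dot2 (u₃.1, u₃.2.1) v ≤ 1} := by
  ext ⟨x₁, x₂, x₃⟩
  simp only [dot3, dot2, Set.mem_inter_iff, Set.mem_ofPred_eq, Set.mem_image, Prod.exists,
    Prod.mk.injEq]
  constructor
  · rintro ⟨h, rfl⟩
    exact ⟨x₁, x₂, by simpa using h, rfl, rfl, rfl⟩
  · rintro ⟨_, _, h, rfl, rfl, rfl⟩
    exact ⟨by simpa using h, rfl⟩

/-- The vector `u` with `{x | dot3 u x ≤ 1} = {x | dot3 v (x - p) ≤ h}` when `0 < dot3 v p + h`. -/
def halfspaceNormal (v p : ℝ × ℝ × ℝ) (h : ℝ) : ℝ × ℝ × ℝ := (dot3 v p + h)⁻¹ • v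

section HalfspaceNormal

variable {v p : ℝ × ℝ × ℝ} {h : ℝ}

lemma dot3_halfspaceNormal_lt_one_iff (hc : 0 < dot3 v p + h) (x : ℝ × ℝ × ℝ) :
    dot3 (halfspaceNormal v p h) x < 1 ↔ dot3 v (x - p) < h := by
  rw [halfspaceNormal, dot3_smul_left, inv_mul_lt_one₀ hc, dot3_sub_right, sub_lt_iff_lt_add']

lemma dot3_halfspaceNormal_eq_one_iff (hc : 0 < dot3 v p + h) (x : ℝ × ℝ × ℝ) :
    dot3 (halfspaceNormal v p h) x = 1 ↔ dot3 v (x - p) = h := by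
  rw [halfspaceNormal, dot3_smul_left, inv_mul_eq_one₀ hc.ne', dot3_sub_right,
    sub_eq_iff_eq_add', eq_comm]

end HalfspaceNormal

def tripleProduct (v₁ v₂ v₃ : ℝ × ℝ × ℝ) : ℝ :=
  v₁.1 * (v₂.2.1 * v₃.2.2 - v₂.2.2 * v₃.2.1) - v₁.2.1 * (v₂.1 * v₃.2.2 - v₂.2.2 * v₃.1) +
    v₁.2.2 * (v₂.1 * v₃.2.1 - v₂.2.1 * v₃.1)

lemma tripleProduct_smul (a b c : ℝ) (v₁ v₂ v₃ : ℝ × ℝ × ℝ) :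
    tripleProduct (a • v₁) (b • v₂) (c • v₃) = a * b * c * tripleProduct v₁ v₂ v₃ := by
  simp only [tripleProduct, Prod.smul_fst, Prod.smul_snd, smul_eq_mul]
  ring

lemma linearIndependent_of_tripleProduct_ne_zero {v₁ v₂ v₃ : ℝ × ℝ × ℝ}
    (h : tripleProduct v₁ v₂ v₃ ≠ 0) : LinearIndependent ℝ ![v₁, v₂, v₃] := by
  rw [Fintype.linearIndependent_iff]
  intro c hc
  simp only [Fin.sum_univ_three, Matrix.cons_val_zero, Matrix.cons_val_one, Matrix.cons_val_two,
    Matrix.tail_cons, Matrix.head_cons, Prod.ext_iff, Prod.fst_add, Prod.snd_add, Prod.smul_fst,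
    Prod.smul_snd, smul_eq_mul, Prod.fst_zero, Prod.snd_zero] at hc
  obtain ⟨E₁, E₂, E₃⟩ := hc
  intro i
  refine (mul_eq_zero.1 ?_).resolve_right h
  -- Cramer's rule: pair the three coordinate equations with the cofactors of the `i`-th row.
  fin_cases i <;> simp only [tripleProduct, Fin.zero_eta, Fin.mk_one, Fin.reduceFinMk]
  · linear_combination (v₂.2.1 * v₃.2.2 - v₂.2.2 * v₃.2.1) * E₁ -
      (v₂.1 * v₃.2.2 - v₂.2.2 * v₃.1) * E₂ + (v₂.1 * v₃.2.1 - v₂.2.1 * v₃.1) * E₃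
  · linear_combination -(v₁.2.1 * v₃.2.2 - v₁.2.2 * v₃.2.1) * E₁ +
      (v₁.1 * v₃.2.2 - v₁.2.2 * v₃.1) * E₂ - (v₁.1 * v₃.2.1 - v₁.2.1 * v₃.1) * E₃
  · linear_combination (v₁.2.1 * v₂.2.2 - v₁.2.2 * v₂.2.1) * E₁ -
      (v₁.1 * v₂.2.2 - v₁.2.2 * v₂.1) * E₂ + (v₁.1 * v₂.2.1 - v₁.2.1 * v₂.1) * E₃

end Dot3

def intPoint (p : ℤ × ℤ × ℕ) : ℝ × ℝ × ℝ := (p.1, p.2.1, p.2.2)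

lemma mem_SZ3_iff {b : ℝ × ℝ} {S : Set (ℝ × ℝ)}
    (hS : S = {x | ∃ z w : ℤ, x = (b.1 + (z : ℝ), b.2 + (w : ℝ))}) {x : ℝ × ℝ × ℝ} :
    x ∈ SZ3 S ↔ ∃ p : ℤ × ℤ × ℕ, x = (b.1, b.2, 0) + intPoint p := by
  subst hS
  obtain ⟨x₁, x₂, x₃⟩ := x
  simp [SZ3, intPoint, eq_comm (a := x₃), and_assoc]

lemma exists_nat_le_mul_one_sub_lt_one {g : ℝ} (hg₀ : 0 ≤ g) (hg₁ : g < 1) :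
    ∃ m : ℕ, g ≤ m * (1 - g) ∧ m * (1 - g) < 1 := by
  have h : 0 < 1 - g := by linarith
  refine ⟨⌈g / (1 - g)⌉₊, (div_le_iff₀ h).1 (Nat.le_ceil _), ?_⟩
  have := (lt_div_iff₀ h).1 (sub_lt_iff_lt_add.2 (Nat.ceil_lt_add_one (div_nonneg hg₀ h.le)))
  linarith

lemma type3_denominators_pos {b : ℝ × ℝ} (hb2 : -1 ≤ b.2) (hb21 : b.2 ≤ b.1) (hb1 : b.1 ≤ 0)
    (hbZ : ¬ ∃ z w : ℤ, b = ((z : ℝ), (w : ℝ))) {g1 g2 g3 : ℝ} (hg1 : 0 ≤ g1) (hg2 : 0 < g2)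
    (hg3' : g3 < 1) :
    0 < (b.1 + 1) + g1 * (b.2 + 1) ∧ 0 < -b.1 + g2 * (b.2 + 1) ∧ 0 < g3 * b.1 - b.2 := by
  have hb (z w : ℤ) : b ≠ ((z : ℝ), (w : ℝ)) := fun h => hbZ ⟨z, w, h⟩
  have h₁ := hb (-1) (-1)
  have h₂ := hb 0 (-1)
  have h₃ := hb 0 0
  simp only [Int.cast_neg, Int.cast_one, Int.cast_zero, ne_eq, Prod.ext_iff, not_and] at h₁ h₂ h₃
  refine ⟨?_, ?_, ?_⟩
  · rcases (hb2.trans hb21).lt_or_eq with h | h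
    · nlinarith
    · exact absurd (le_antisymm (h ▸ hb21) hb2) (h₁ h.symm)
  · rcases hb1.lt_or_eq with h | h
    · nlinarith
    · have := lt_of_le_of_ne hb2 (Ne.symm (h₂ h))
      nlinarith
  · rcases hb1.lt_or_eq with h | h
    · nlinarith
    · have := lt_of_le_of_ne hb21 fun h' => h₃ h (h' ▸ h)
      nlinarith

section Type3

variable (g1 g2 g3 : ℝ) (m : ℕ)

def type3Dir : Fin 3 → ℝ × ℝ × ℝ :=
  ![((m : ℝ) + 1, (m + 1) * g1, m + 1 + m * g1), (-1, g2, g2 - 1), (g3, -1, 0)]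

def type3Height : Fin 3 → ℝ :=
  ![(m + 1) * (1 + g1), g2, 0]

def type3FacetOffset : Fin 3 → ℤ × ℤ × ℕ :=
  ![(-m, 1 - m, m + 1), (-1, 0, 1), (0, 0, 1)]

-- Cramer's rule for the three facet equations `dot3 (type3Dir i) y = type3Height i`.
def type3ApexHeight : ℝ :=
  (m + 1) * (1 + g1 + g2 - g2 * g3) /
    tripleProduct (type3Dir g1 g2 g3 m 0) (type3Dir g1 g2 g3 m 1) (type3Dir g1 g2 g3 m 2)

def type3ApexOffset : ℝ × ℝ × ℝ :=
  (-(g2 + (1 - g2) * type3ApexHeight g1 g2 g3 m) / (1 - g2 * g3),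
    -g3 * (g2 + (1 - g2) * type3ApexHeight g1 g2 g3 m) / (1 - g2 * g3),
    type3ApexHeight g1 g2 g3 m)

variable {g1 g2 g3 m}

lemma dot3_type3Dir_facetOffset_self (i : Fin 3) :
    dot3 (type3Dir g1 g2 g3 m i) (intPoint (type3FacetOffset m i)) = type3Height g1 g2 m i := by
  fin_cases i
  · simp [type3Dir, type3Height, type3FacetOffset, intPoint, dot3]
    ring
  all_goals simp [type3Dir, type3Height, type3FacetOffset, intPoint, dot3]

lemma dot3_type3Dir_facetOffset_lt (hg1 : 0 < g1) (hg2' : g2 < 1) (hg3 : 0 < g3)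
    (hm : m * (1 - g3) < 1) {i j : Fin 3} (hij : j ≠ i) :
    dot3 (type3Dir g1 g2 g3 m j) (intPoint (type3FacetOffset m i)) < type3Height g1 g2 m j := by
  fin_cases i <;> fin_cases j <;>
    simp [type3Dir, type3Height, type3FacetOffset, intPoint, dot3] at hij ⊢ <;> nlinarith

lemma one_le_type3FacetOffset (i : Fin 3) : 1 ≤ (type3FacetOffset m i).2.2 := by
  fin_cases i <;> simp [type3FacetOffset]

lemma tripleProduct_type3Dir_pos (hg1 : 0 < g1) (hg2 : 0 < g2) (hg3 : 0 < g3)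
    (hm : g3 ≤ m * (1 - g3)) :
    0 < tripleProduct (type3Dir g1 g2 g3 m 0) (type3Dir g1 g2 g3 m 1) (type3Dir g1 g2 g3 m 2) := by
  simp [type3Dir, tripleProduct]
  nlinarith [mul_pos hg1 (mul_pos hg2 hg3), mul_nonneg hg1.le (sub_nonneg.2 hm), mul_pos hg2 hg3]

lemma dot3_type3Dir_apexOffset
    (hΔ : tripleProduct (type3Dir g1 g2 g3 m 0) (type3Dir g1 g2 g3 m 1) (type3Dir g1 g2 g3 m 2) ≠ 0)
    (hg23 : 1 - g2 * g3 ≠ 0) (i : Fin 3) :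
    dot3 (type3Dir g1 g2 g3 m i) (type3ApexOffset g1 g2 g3 m) = type3Height g1 g2 m i := by
  have hr := div_mul_cancel₀ ((m + 1) * (1 + g1 + g2 - g2 * g3) : ℝ) hΔ
  rw [← type3ApexHeight] at hr
  simp only [tripleProduct, type3Dir, Matrix.cons_val_zero, Matrix.cons_val_one,
    Matrix.cons_val_two, Matrix.head_cons, Matrix.tail_cons] at hr
  fin_cases i <;> simp [type3Dir, type3Height, type3ApexOffset, dot3] <;> field_simp
  · linear_combination hr
  · ring
  · ring

lemma type3ApexHeight_pos (hg1 : 0 < g1) (hg2 : 0 < g2) (hg3 : 0 < g3) (hg3' : g3 < 1)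
    (hm : g3 ≤ m * (1 - g3)) : 0 < type3ApexHeight g1 g2 g3 m :=
  div_pos (by nlinarith) (tripleProduct_type3Dir_pos hg1 hg2 hg3 hm)

lemma exists_type3Height_le_dot3_intPoint (hg1 : 0 < g1) (hg2 : 0 < g2) (hg2' : g2 < 1)
    (hg3 : 0 < g3) (hg3' : g3 < 1) (hm : g3 ≤ m * (1 - g3)) (p : ℤ × ℤ × ℕ) :
    ∃ i, type3Height g1 g2 m i ≤ dot3 (type3Dir g1 g2 g3 m i) (intPoint p) := by
  obtain ⟨z, w, k⟩ := p
  by_contra! h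
  have h₀ := h 0
  have h₁ := h 1
  have h₂ := h 2
  simp only [type3Dir, type3Height, intPoint, dot3, Matrix.cons_val_zero, Matrix.cons_val_one,
    Matrix.cons_val_two, Matrix.head_cons, Matrix.tail_cons] at h₀ h₁ h₂
  have hk : (0 : ℝ) ≤ k := k.cast_nonneg
  rcases le_or_gt (z + k) 0 with hzk | hzk
  · have hzk' : (z : ℝ) + k ≤ 0 := by exact_mod_cast hzk
    have hwk : (w : ℝ) + k - 1 < 0 := by nlinarith
    have hwz : (w : ℝ) - 1 < z := by nlinarith
    have hwz' : (w : ℝ) ≤ z := by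
      have : w - 1 < z := by exact_mod_cast hwz
      exact_mod_cast (by omega : w ≤ z)
    nlinarith
  · have hzk' : (1 : ℝ) ≤ z + k := by exact_mod_cast hzk
    have hA : ((m : ℤ) + 1) * (w - 1) + m * k < 0 := by
      have : ((m : ℝ) + 1) * (w - 1) + m * k < 0 := by nlinarith
      exact_mod_cast this
    have hw : w ≤ 0 := by nlinarith
    have hz : z ≤ -1 := by
      by_contra! hz
      have : (0 : ℝ) ≤ z := by exact_mod_cast (by omega : (0 : ℤ) ≤ z)
      have : (w : ℝ) ≤ 0 := by exact_mod_cast hw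
      nlinarith
    -- `hm`, i.e. `g3 * (m + 1) ≤ m`, turns `g3 * z < w` into this bound.
    have hmw : ((m : ℤ) + 1) * -w < m * -z := by
      have : (1 : ℝ) ≤ -z := by exact_mod_cast (by omega : (1 : ℤ) ≤ -z)
      have : ((m : ℝ) + 1) * -w < m * -z := by nlinarith
      exact_mod_cast this
    nlinarith [mul_nonneg (Int.natCast_nonneg m) (by omega : (0 : ℤ) ≤ z + k - 1)]

end Type3

section Type3Cone

def type3Scale (g1 g2 g3 : ℝ) (m : ℕ) (b : ℝ × ℝ) (i : Fin 3) : ℝ :=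
  dot3 (type3Dir g1 g2 g3 m i) (b.1, b.2, 0) + type3Height g1 g2 m i

def type3Normal (g1 g2 g3 : ℝ) (m : ℕ) (b : ℝ × ℝ) (i : Fin 3) : ℝ × ℝ × ℝ :=
  halfspaceNormal (type3Dir g1 g2 g3 m i) (b.1, b.2, 0) (type3Height g1 g2 m i)

def type3Cone (g1 g2 g3 : ℝ) (m : ℕ) (b : ℝ × ℝ) : Set (ℝ × ℝ × ℝ) :=
  {x | ∀ i, dot3CLM (type3Normal g1 g2 g3 m b i) x ≤ 1}

def type3FacetPoint (m : ℕ) (b : ℝ × ℝ) (i : Fin 3) : ℝ × ℝ × ℝ :=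
  (b.1, b.2, 0) + intPoint (type3FacetOffset m i)

variable {g1 g2 g3 : ℝ} {m : ℕ} {b : ℝ × ℝ}

lemma type3Scale_pos (hD1 : 0 < (b.1 + 1) + g1 * (b.2 + 1)) (hD2 : 0 < -b.1 + g2 * (b.2 + 1))
    (hD3 : 0 < g3 * b.1 - b.2) (i : Fin 3) : 0 < type3Scale g1 g2 g3 m b i := by
  fin_cases i <;> simp [type3Scale, type3Dir, type3Height, dot3]
  · nlinarith
  · linarith
  · linarith

lemma type3Normal_proj :
    ((type3Normal g1 g2 g3 m b 0).1, (type3Normal g1 g2 g3 m b 0).2.1) =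
        (1 / ((b.1 + 1) + g1 * (b.2 + 1)), g1 / ((b.1 + 1) + g1 * (b.2 + 1))) ∧
      ((type3Normal g1 g2 g3 m b 1).1, (type3Normal g1 g2 g3 m b 1).2.1) =
        (-1 / (-b.1 + g2 * (b.2 + 1)), g2 / (-b.1 + g2 * (b.2 + 1))) ∧
      ((type3Normal g1 g2 g3 m b 2).1, (type3Normal g1 g2 g3 m b 2).2.1) =
        (g3 / (g3 * b.1 - b.2), -1 / (g3 * b.1 - b.2)) := by
  have hm : (m : ℝ) + 1 ≠ 0 := by positivity
  refine ⟨?_, ?_, ?_⟩ <;> simp only [type3Normal, halfspaceNormal, type3Dir, type3Height, dot3,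
    Prod.smul_fst, Prod.smul_snd, smul_eq_mul, Matrix.cons_val_zero, Matrix.cons_val_one,
    Matrix.cons_val_two, Matrix.head_cons, Matrix.tail_cons, Prod.mk.injEq, mul_zero, add_zero]
  · rw [show (m + 1) * b.1 + (m + 1) * g1 * b.2 + (m + 1) * (1 + g1) =
      ((m : ℝ) + 1) * ((b.1 + 1) + g1 * (b.2 + 1)) by ring, inv_mul_eq_div, inv_mul_eq_div,
      div_mul_cancel_left₀ hm, one_div, mul_div_mul_left _ _ hm]
    exact ⟨rfl, rfl⟩
  all_goals constructor <;> ring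

lemma linearIndependent_type3Normal (hc : ∀ i, 0 < type3Scale g1 g2 g3 m b i)
    (hΔ : 0 < tripleProduct (type3Dir g1 g2 g3 m 0) (type3Dir g1 g2 g3 m 1)
      (type3Dir g1 g2 g3 m 2)) :
    LinearIndependent ℝ
      ![type3Normal g1 g2 g3 m b 0, type3Normal g1 g2 g3 m b 1, type3Normal g1 g2 g3 m b 2] := by
  refine linearIndependent_of_tripleProduct_ne_zero ?_
  simp only [type3Normal, halfspaceNormal, tripleProduct_smul]
  exact (mul_pos (mul_pos (mul_pos (inv_pos.2 (hc 0)) (inv_pos.2 (hc 1))) (inv_pos.2 (hc 2)))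
    hΔ).ne'

lemma dot3_type3Normal_apex (hc : ∀ i, 0 < type3Scale g1 g2 g3 m b i)
    (hΔ : tripleProduct (type3Dir g1 g2 g3 m 0) (type3Dir g1 g2 g3 m 1) (type3Dir g1 g2 g3 m 2) ≠ 0)
    (hg23 : 1 - g2 * g3 ≠ 0) (i : Fin 3) :
    dot3 (type3Normal g1 g2 g3 m b i) ((b.1, b.2, 0) + type3ApexOffset g1 g2 g3 m) = 1 :=
  (dot3_halfspaceNormal_eq_one_iff (hc i) _).2 <| by
    rw [add_sub_cancel_left]
    exact dot3_type3Dir_apexOffset hΔ hg23 i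

lemma dot3_type3Normal_facetPoint_self (hc : ∀ i, 0 < type3Scale g1 g2 g3 m b i) (i : Fin 3) :
    dot3 (type3Normal g1 g2 g3 m b i) (type3FacetPoint m b i) = 1 :=
  (dot3_halfspaceNormal_eq_one_iff (hc i) _).2 <| by
    rw [type3FacetPoint, add_sub_cancel_left]
    exact dot3_type3Dir_facetOffset_self i

lemma dot3_type3Normal_facetPoint_lt (hc : ∀ i, 0 < type3Scale g1 g2 g3 m b i)
    (hg1 : 0 < g1) (hg2' : g2 < 1) (hg3 : 0 < g3) (hm : m * (1 - g3) < 1) {i j : Fin 3}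
    (hij : j ≠ i) : dot3 (type3Normal g1 g2 g3 m b j) (type3FacetPoint m b i) < 1 :=
  (dot3_halfspaceNormal_lt_one_iff (hc j) _).2 <| by
    rw [type3FacetPoint, add_sub_cancel_left]
    exact dot3_type3Dir_facetOffset_lt hg1 hg2' hg3 hm hij

lemma interior_type3Cone_inter_SZ3 {S : Set (ℝ × ℝ)}
    (hS : S = {x | ∃ z w : ℤ, x = (b.1 + (z : ℝ), b.2 + (w : ℝ))})
    (hc : ∀ i, 0 < type3Scale g1 g2 g3 m b i) (hu : ∀ i, type3Normal g1 g2 g3 m b i ≠ 0)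
    (hg1 : 0 < g1) (hg2 : 0 < g2) (hg2' : g2 < 1) (hg3 : 0 < g3) (hg3' : g3 < 1)
    (hm : g3 ≤ m * (1 - g3)) :
    interior (type3Cone g1 g2 g3 m b) ∩ SZ3 S = ∅ := by
  rw [type3Cone, interior_setOf_forall_le_one _ fun i => dot3CLM_ne_zero (hu i),
    Set.eq_empty_iff_forall_notMem]
  rintro x ⟨hx, hxS⟩
  obtain ⟨p, rfl⟩ := (mem_SZ3_iff hS).1 hxS
  obtain ⟨i, hi⟩ := exists_type3Height_le_dot3_intPoint hg1 hg2 hg2' hg3 hg3' hm p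
  have hxi := hx i
  rw [dot3CLM_apply, type3Normal, dot3_halfspaceNormal_lt_one_iff (hc i), add_sub_cancel_left]
    at hxi
  exact hi.not_gt hxi

lemma isMaxFreeNbhd_type3Cone {S : Set (ℝ × ℝ)}
    (hS : S = {x | ∃ z w : ℤ, x = (b.1 + (z : ℝ), b.2 + (w : ℝ))})
    (hc : ∀ i, 0 < type3Scale g1 g2 g3 m b i) (hu : ∀ i, type3Normal g1 g2 g3 m b i ≠ 0)
    (hg1 : 0 < g1) (hg2 : 0 < g2) (hg2' : g2 < 1) (hg3 : 0 < g3) (hg3' : g3 < 1)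
    (hm : g3 ≤ m * (1 - g3)) (hm' : m * (1 - g3) < 1) :
    IsMaxFreeNbhd (SZ3 S) (type3Cone g1 g2 g3 m b) :=
  isMaxFreeNbhd_of_facet_points _ (interior_type3Cone_inter_SZ3 hS hc hu hg1 hg2 hg2' hg3 hg3' hm)
    (type3FacetPoint m b) (fun _ => (mem_SZ3_iff hS).2 ⟨_, rfl⟩)
    (dot3_type3Normal_facetPoint_self hc) fun _ _ hij =>
      dot3_type3Normal_facetPoint_lt hc hg1 hg2' hg3 hm' hij

lemma exists_SZ3_mem_intrinsicInterior_type3Cone_facet {S : Set (ℝ × ℝ)}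
    (hS : S = {x | ∃ z w : ℤ, x = (b.1 + (z : ℝ), b.2 + (w : ℝ))})
    (hc : ∀ i, 0 < type3Scale g1 g2 g3 m b i) (hg1 : 0 < g1) (hg2' : g2 < 1) (hg3 : 0 < g3)
    (hm : m * (1 - g3) < 1) (i : Fin 3) :
    ∃ p ∈ intrinsicInterior ℝ
        (type3Cone g1 g2 g3 m b ∩ {x | dot3 (type3Normal g1 g2 g3 m b i) x = 1}),
      p ∈ SZ3 S ∧ ∃ k : ℕ, 1 ≤ k ∧ p.2.2 = k :=
  ⟨type3FacetPoint m b i,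
    mem_intrinsicInterior_facet _ (dot3_type3Normal_facetPoint_self hc i) fun _ hj =>
      dot3_type3Normal_facetPoint_lt hc hg1 hg2' hg3 hm hj,
    (mem_SZ3_iff hS).2 ⟨_, rfl⟩, _, one_le_type3FacetOffset (m := m) i,
    by simp [type3FacetPoint, intPoint]⟩

end Type3Cone

/-- Proposition 5.2: for every Type 3 triangle `T` there is a polyhedron `P ⊆ ℝ³` which is
a translated simplicial cone with apex above the plane `x₃ = 0`, has `T × {0}` as its slice
at height `0`, is maximal `(S × ℤ₊)`-free, and each of whose three facets contains an
`S × ℤ₊` point with last coordinate at least `1` in its relative interior. -/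
theorem stmt17 (b : ℝ × ℝ) (hb2 : -1 ≤ b.2) (hb21 : b.2 ≤ b.1) (hb1 : b.1 ≤ 0)
    (hbZ : ¬ ∃ z w : ℤ, b = ((z : ℝ), (w : ℝ)))
    (S : Set (ℝ × ℝ)) (hS : S = {x | ∃ z w : ℤ, x = (b.1 + (z : ℝ), b.2 + (w : ℝ))})
    (g1 g2 g3 : ℝ) (hg1 : 0 < g1) (hg2 : 0 < g2) (hg3 : 0 < g3)
    (hg2' : g2 < 1) (hg3' : g3 < 1)
    (w1 w2 w3 : ℝ × ℝ)
    (hw1 : w1 = (1 / ((b.1 + 1) + g1 * (b.2 + 1)), g1 / ((b.1 + 1) + g1 * (b.2 + 1))))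
    (hw2 : w2 = (-1 / (-b.1 + g2 * (b.2 + 1)), g2 / (-b.1 + g2 * (b.2 + 1))))
    (hw3 : w3 = (g3 / (g3 * b.1 - b.2), -1 / (g3 * b.1 - b.2)))
    (T : Set (ℝ × ℝ))
    (hT : T = {x | dot2 w1 x ≤ 1 ∧ dot2 w2 x ≤ 1 ∧ dot2 w3 x ≤ 1}) :
    ∃ (P : Set (ℝ × ℝ × ℝ)) (u1 u2 u3 apex : ℝ × ℝ × ℝ),
      P = {x | dot3 u1 x ≤ 1 ∧ dot3 u2 x ≤ 1 ∧ dot3 u3 x ≤ 1} ∧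
      LinearIndependent ℝ ![u1, u2, u3] ∧
      dot3 u1 apex = 1 ∧ dot3 u2 apex = 1 ∧ dot3 u3 apex = 1 ∧
      0 < apex.2.2 ∧
      P ∩ {x : ℝ × ℝ × ℝ | x.2.2 = 0} = (fun v : ℝ × ℝ => ((v.1, v.2, (0 : ℝ)) : ℝ × ℝ × ℝ)) '' T ∧
      IsMaxFreeNbhd (SZ3 S) P ∧
      (∀ u ∈ ({u1, u2, u3} : Set (ℝ × ℝ × ℝ)),
        ∃ p ∈ intrinsicInterior ℝ (P ∩ {x : ℝ × ℝ × ℝ | dot3 u x = 1}),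
          p ∈ SZ3 S ∧ ∃ k : ℕ, 1 ≤ k ∧ p.2.2 = (k : ℝ)) := by
  obtain ⟨hD1, hD2, hD3⟩ := type3_denominators_pos hb2 hb21 hb1 hbZ hg1.le hg2 hg3'
  obtain ⟨m, hm, hm'⟩ := exists_nat_le_mul_one_sub_lt_one hg3.le hg3'
  have hc := type3Scale_pos (m := m) hD1 hD2 hD3
  have hΔ := tripleProduct_type3Dir_pos hg1 hg2 hg3 hm
  have hli := linearIndependent_type3Normal hc hΔ
  have hapex := dot3_type3Normal_apex hc hΔ.ne' (by nlinarith : 1 - g2 * g3 ≠ 0)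
  obtain ⟨hw1', hw2', hw3'⟩ := type3Normal_proj (g1 := g1) (g2 := g2) (g3 := g3) (m := m) (b := b)
  set u := type3Normal g1 g2 g3 m b
  have hu (i : Fin 3) : u i ≠ 0 := by
    fin_cases i
    exacts [hli.ne_zero 0, hli.ne_zero 1, hli.ne_zero 2]
  have hP : {x | dot3 (u 0) x ≤ 1 ∧ dot3 (u 1) x ≤ 1 ∧ dot3 (u 2) x ≤ 1} =
      type3Cone g1 g2 g3 m b := by
    ext x
    simp [type3Cone, Fin.forall_fin_succ, u]
  refine ⟨_, _, _, _, _, rfl, hli, hapex 0, hapex 1, hapex 2, ?_, ?_, ?_, ?_⟩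
  · simpa [type3ApexOffset] using type3ApexHeight_pos hg1 hg2 hg3 hg3' hm
  · rw [setOf_dot3_le_one_inter_eq_image, hT, hw1, hw2, hw3, hw1', hw2', hw3']
  · rw [hP]
    exact isMaxFreeNbhd_type3Cone hS hc hu hg1 hg2 hg2' hg3 hg3' hm hm'
  · simp only [Set.mem_insert_iff, Set.mem_singleton_iff, hP]
    have key := exists_SZ3_mem_intrinsicInterior_type3Cone_facet hS hc hg1 hg2' hg3 hm'
    rintro v (rfl | rfl | rfl)
    exacts [key 0, key 1, key 2]

end
end

section
/- Let b = (b₁, b₂) ∈ ℝ² lie in the interior of the triangle conv{(0, −1), (0, −1/2), (−1, −1)} (equivalently, −1 < b₂ < b₁ < 0 and b₁ − 2b₂ > 1), let S = b + ℤ², let δ_b := −b₁² − b₂² + b₁b₂ − b₂ (which is positive), and let P(b) ⊆ ℝ³ be the polyhedron defined by the inequalities: (−b₁/δ_b)x₁ + ((b₁−b₂)/δ_b)x₂ − ((b₁−b₂)/δ_b)x₃ ≤ 1; ((−b₁−1)/δ_b)x₁ + ((b₁−b₂)/δ_b)x₂ ≤ 1; (−b₁/δ_b)x₁ + ((b₁−b₂−1)/δ_b)x₂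 + ((2−b₁+2b₂)/(2δ_b))x₃ ≤ 1. Then int(P(b)) ∩ (S × ℤ₊) = ∅. -/
noncomputable section

lemma stmt19_key (a d : ℝ) (z w : ℤ) (k : ℕ)
    (h1 : -1 < d) (h2 : d < a) (h3 : a < 0) (h4 : 1 < a - 2 * d)
    (hA : -a * (z : ℝ) + (a - d) * ((w : ℝ) - (k : ℝ)) + d < 0)
    (hB : -a - a * (z : ℝ) - (z : ℝ) + (a - d) * (w : ℝ) + d < 0)
    (hC : -a * (z : ℝ) + (a - d - 1) * (w : ℝ) + ((2 - a + 2 * d) / 2) * (k : ℝ) < 0) :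
    False := by
  have hk0 : (0 : ℝ) ≤ (k : ℝ) := Nat.cast_nonneg k
  have hc : (0 : ℝ) < a - d := by linarith
  have hu : (0 : ℝ) < -a := by linarith
  have hα : (0 : ℝ) < (2 - a + 2 * d) / 2 := by linarith
  rcases le_or_gt 0 z with hz | hz
  · have hzr : (0 : ℝ) ≤ (z : ℝ) := by exact_mod_cast hz
    -- w ≥ 1
    have hw1 : 1 ≤ w := by
      by_contra h
      push_neg at h
      have hwr : (w : ℝ) ≤ 0 := by exact_mod_cast Int.lt_add_one_iff.mp h
      linarith [mul_nonneg hu.le hzr, mul_nonneg (by linarith : (0:ℝ) ≤ 1 - (a - d))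
        (by linarith : (0:ℝ) ≤ -(w:ℝ)), mul_nonneg hα.le hk0]
    have hwr1 : (1 : ℝ) ≤ (w : ℝ) := by exact_mod_cast hw1
    -- z ≥ 1
    have hz1 : 1 ≤ z := by
      by_contra h
      push_neg at h
      have hz0 : z = 0 := le_antisymm (Int.lt_add_one_iff.mp h) hz
      rw [hz0] at hB
      push_cast at hB
      linarith [mul_nonneg hc.le (by linarith : (0:ℝ) ≤ (w:ℝ) - 1)]
    have hzr1 : (1 : ℝ) ≤ (z : ℝ) := by exact_mod_cast hz1
    -- k ≥ w
    have hkw : (w : ℝ) ≤ (k : ℝ) := by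
      by_contra h
      push_neg at h
      have : ((k : ℤ) : ℝ) < (w : ℝ) := by push_cast; exact_mod_cast h
      have hkw' : (k : ℤ) + 1 ≤ w := Int.add_one_le_iff.mpr (by exact_mod_cast this)
      have hkwr : (k : ℝ) + 1 ≤ (w : ℝ) := by exact_mod_cast hkw'
      linarith [mul_nonneg hc.le (by linarith : (0:ℝ) ≤ (w:ℝ) - (k:ℝ) - 1),
        mul_nonneg hu.le (by linarith : (0:ℝ) ≤ (z:ℝ) - 1)]
    -- w ≥ 2z + 1
    have hw2z : 2 * (z : ℝ) + 1 ≤ (w : ℝ) := by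
      by_contra h
      push_neg at h
      have : w ≤ 2 * z := by exact_mod_cast Int.lt_add_one_iff.mp (by exact_mod_cast h)
      have hwr2 : (w : ℝ) ≤ 2 * (z : ℝ) := by exact_mod_cast this
      linarith [mul_nonneg hα.le (by linarith : (0:ℝ) ≤ (k:ℝ) - (w:ℝ)),
        mul_nonneg (by linarith : (0:ℝ) ≤ -a/2) (by linarith : (0:ℝ) ≤ 2*(z:ℝ) - (w:ℝ))]
    linarith [mul_nonneg hc.le (by linarith : (0:ℝ) ≤ (w:ℝ) - (2*(z:ℝ)+1)),
      mul_nonneg (by linarith : (0:ℝ) ≤ a - 2*d - 1) (by linarith : (0:ℝ) ≤ (z:ℝ) - 1)]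
  · have hzr : (z : ℝ) ≤ -1 := by exact_mod_cast Int.lt_add_one_iff.mp (by linarith [hz] : z < -1 + 1)
    -- w ≤ z
    have hwz : w ≤ z := by
      by_contra h
      push_neg at h
      have : (z : ℝ) + 1 ≤ (w : ℝ) := by exact_mod_cast Int.add_one_le_iff.mpr h
      linarith [mul_nonneg hc.le (by linarith : (0:ℝ) ≤ (w:ℝ) - 1 - (z:ℝ)),
        mul_nonneg (by linarith : (0:ℝ) ≤ 1 + d) (by linarith : (0:ℝ) ≤ -(z:ℝ) - 1)]
    have hwzr : (w : ℝ) ≤ (z : ℝ) := by exact_mod_cast hwz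
    linarith [mul_nonneg (by linarith : (0:ℝ) ≤ 1 - (a - d)) (by linarith : (0:ℝ) ≤ (z:ℝ) - (w:ℝ)),
      mul_nonneg hα.le hk0,
      mul_nonneg (by linarith : (0:ℝ) ≤ 1 + d) (by linarith : (0:ℝ) ≤ -(z:ℝ) - 1)]

/-- Proposition 5.4: the pyramid `P(b)` associated with mixing-set Type 3 triangles is
`(S × ℤ₊)`-free, i.e. its interior contains no point of `S × ℤ₊`. -/
theorem stmt19 (b : ℝ × ℝ) (hb2 : -1 < b.2) (hb21 : b.2 < b.1) (hb1 : b.1 < 0)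
    (hbmix : 1 < b.1 - 2 * b.2)
    (S : Set (ℝ × ℝ)) (hS : S = {x | ∃ z w : ℤ, x = (b.1 + (z : ℝ), b.2 + (w : ℝ))})
    (db : ℝ) (hdb : db = -b.1 ^ 2 - b.2 ^ 2 + b.1 * b.2 - b.2)
    (P : Set (ℝ × ℝ × ℝ))
    (hP : P = {x : ℝ × ℝ × ℝ |
      (-b.1 / db) * x.1 + ((b.1 - b.2) / db) * x.2.1 - ((b.1 - b.2) / db) * x.2.2 ≤ 1 ∧
      ((-b.1 - 1) / db) * x.1 + ((b.1 - b.2) / db) * x.2.1 ≤ 1 ∧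
      (-b.1 / db) * x.1 + ((b.1 - b.2 - 1) / db) * x.2.1 +
        ((2 - b.1 + 2 * b.2) / (2 * db)) * x.2.2 ≤ 1}) :
    interior P ∩ SZ3 S = ∅ := by
  set a := b.1 with ha
  set d := b.2 with hd2
  have hδ : 0 < db := by
    rw [hdb]
    nlinarith [mul_pos (by linarith : (0:ℝ) < -d) (by linarith : (0:ℝ) < 1 + d),
      mul_pos (by linarith : (0:ℝ) < -a) (by linarith : (0:ℝ) < a - d)]
  rw [Set.eq_empty_iff_forall_notMem]
  rintro x ⟨hxint, hxS, k, hk⟩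
  rw [hS] at hxS
  obtain ⟨z, w, hzw⟩ := hxS
  have hx1 : x.1 = a + (z : ℝ) := congrArg Prod.fst hzw
  have hx2 : x.2.1 = d + (w : ℝ) := congrArg Prod.snd hzw
  -- get a ball around x inside P
  obtain ⟨ε, hε, hball⟩ := Metric.mem_nhds_iff.mp (mem_interior_iff_mem_nhds.mp hxint)
  have hmemp : (x.1 + ε / 2, x.2) ∈ P := by
    apply hball
    simp only [Metric.mem_ball, Prod.dist_eq, Real.dist_eq, dist_self]
    rw [show x.1 + ε / 2 - x.1 = ε / 2 by ring, abs_of_pos (by linarith)]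
    simp [max_def]; split <;> linarith
  have hmemm : (x.1 - ε / 2, x.2) ∈ P := by
    apply hball
    simp only [Metric.mem_ball, Prod.dist_eq, Real.dist_eq, dist_self]
    rw [show x.1 - ε / 2 - x.1 = -(ε / 2) by ring, abs_neg, abs_of_pos (by linarith)]
    simp [max_def]; split <;> linarith
  rw [hP] at hmemp hmemm
  obtain ⟨hp1, -, hp3⟩ := hmemp
  obtain ⟨-, hm2, -⟩ := hmemm
  simp only [Set.mem_setOf_eq] at hp1 hp3 hm2
  have hδ' : db ≠ 0 := ne_of_gt hδ
  have E1 : ∀ y1 y2 y3 : ℝ, (-a / db) * y1 + ((a - d) / db) * y2 - ((a - d) / db) * y3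
      = ((-a) * y1 + (a - d) * y2 - (a - d) * y3) / db := by intros; field_simp
  have E2 : ∀ y1 y2 : ℝ, ((-a - 1) / db) * y1 + ((a - d) / db) * y2
      = ((-a - 1) * y1 + (a - d) * y2) / db := by intros; field_simp
  have E3 : ∀ y1 y2 y3 : ℝ, (-a / db) * y1 + ((a - d - 1) / db) * y2 +
        ((2 - a + 2 * d) / (2 * db)) * y3
      = ((-a) * y1 + (a - d - 1) * y2 + ((2 - a + 2 * d) / 2) * y3) / db := by
    intros; field_simp
  rw [E1] at hp1; rw [E2] at hm2; rw [E3] at hp3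
  have hr1 := (div_le_one hδ).mp hp1
  have hr2 := (div_le_one hδ).mp hm2
  have hr3 := (div_le_one hδ).mp hp3
  have hu : (0 : ℝ) < -a := by linarith
  have hu1 : (0 : ℝ) < a + 1 := by linarith
  have hq1 : (-a) * x.1 + (a - d) * x.2.1 - (a - d) * x.2.2 < db := by
    linarith [hr1, mul_pos hu hε]
  have hq2 : (-a - 1) * x.1 + (a - d) * x.2.1 < db := by
    linarith [hr2, mul_pos hu1 hε]
  have hq3 : (-a) * x.1 + (a - d - 1) * x.2.1 + ((2 - a + 2 * d) / 2) * x.2.2 < db := by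
    linarith [hr3, mul_pos hu hε]
  rw [hx1, hx2, hdb] at hq1 hq2 hq3
  rw [hk] at hq1 hq3
  -- reduce to the key inequalities
  have hA : -a * (z : ℝ) + (a - d) * ((w : ℝ) - (k : ℝ)) + d < 0 := by linarith [hq1]
  have hB : -a - a * (z : ℝ) - (z : ℝ) + (a - d) * (w : ℝ) + d < 0 := by linarith [hq2]
  have hC : -a * (z : ℝ) + (a - d - 1) * (w : ℝ) + ((2 - a + 2 * d) / 2) * (k : ℝ) < 0 := by
    linarith [hq3]
  exact stmt19_key a d z w k hb2 hb21 hb1 hbmix hA hB hC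
end
end
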